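/- arXiv:2411.15473 — 7 statements merged into one kernel-verified Lean document; each statement's English description precedes it below -/
import Mathlib

section
/- Let (T,F) be an s-torsion pair in the m-extended heart D^{[-(m-1),0]}. Then Hom(T,F[j])=0 for all T∈T, F∈F and all integers j<0. -/
open CategoryTheory Limits Pretriangulated Triangulated

variable {D : Type*} [Category D] [Preadditive D] [HasZeroObject D] [HasShift D ℤ]
  [∀ n : ℤ, (shiftFunctor D n).Additive] [Pretriangulated D]

/-- `star S T` is the full subcategory `S * T`, consisting of the objects `Z`
admitting a distinguished triangle `X → Z → Y → X⟦1⟧` with `X ∈ S` and `Y ∈ T`. -/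
def star (S T : Set D) : Set D :=
  {Z | ∃ (X Y : D) (f : X ⟶ Z) (g : Z ⟶ Y) (h : Y ⟶ X⟦(1 : ℤ)⟧),
    (Triangle.mk f g h ∈ distTriang D) ∧ X ∈ S ∧ Y ∈ T}

/-- A t-structure is bounded if every object lies in some `D^{[a,b]}`. -/
def CategoryTheory.Triangulated.TStructure.IsBounded (t : TStructure D) : Prop :=
  ∀ X : D, ∃ a b : ℤ, t.ge a X ∧ t.le b X

/-- The `m`-extended heart `D^{[-(m-1),0]} = D^{≤ 0} ∩ D^{≥ -(m-1)}`
of a t-structure. -/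
def extHeart (t : TStructure D) (m : ℕ) : Set D :=
  {X | t.le 0 X ∧ t.ge (1 - (m : ℤ)) X}

/-- The shifted full subcategory `S[n]` (closed under isomorphisms). -/
def shiftSet (S : Set D) (n : ℤ) : Set D :=
  {X | ∃ Y ∈ S, Nonempty (X ≅ Y⟦n⟧)}

/-- A torsion pair `(T,F)` in the `m`-extended heart: `T`, `F` are full
subcategories of `D^{[-(m-1),0]}` with `Hom(T,F) = 0` and
`D^{[-(m-1),0]} = T * F`. -/
structure IsTorsionPair (t : TStructure D) (m : ℕ) (T F : Set D) : Prop where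
  subsetT : T ⊆ extHeart t m
  subsetF : F ⊆ extHeart t m
  hom_zero : ∀ X ∈ T, ∀ Y ∈ F, ∀ f : X ⟶ Y, f = 0
  heart_eq : extHeart t m = star T F

/-- An s-torsion pair is a torsion pair with `Hom(T,F[-1]) = 0`. -/
structure IsSTorsionPair (t : TStructure D) (m : ℕ) (T F : Set D)
    extends IsTorsionPair t m T F : Prop where
  hom_neg_one_zero : ∀ X ∈ T, ∀ Y ∈ F, ∀ f : X ⟶ Y⟦(-1 : ℤ)⟧, f = 0

/-- `Fac t m S n` is the class of `n`-factors of `S` in the `m`-extended heart: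
objects `Z₀` admitting triangles `Zᵢ → Xᵢ → Zᵢ₋₁ → Zᵢ⟦1⟧` (`1 ≤ i ≤ n`) with
all `Zᵢ` in the `m`-extended heart and all `Xᵢ ∈ S`. -/
def Fac (t : TStructure D) (m : ℕ) (S : Set D) : ℕ → Set D
  | 0 => extHeart t m
  | n + 1 =>
    {Z | Z ∈ extHeart t m ∧ ∃ (Z₁ X₁ : D) (f : Z₁ ⟶ X₁) (g : X₁ ⟶ Z) (h : Z ⟶ Z₁⟦(1 : ℤ)⟧),
      (Triangle.mk f g h ∈ distTriang D) ∧ X₁ ∈ S ∧ Z₁ ∈ Fac t m S n}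

/-- `SubObj t m S n` is the class of `n`-subobjects of `S` in the `m`-extended heart:
objects `Z₀` admitting triangles `Zᵢ₋₁ → Xᵢ → Zᵢ → Zᵢ₋₁⟦1⟧` (`1 ≤ i ≤ n`) with
all `Zᵢ` in the `m`-extended heart and all `Xᵢ ∈ S`. -/
def SubObj (t : TStructure D) (m : ℕ) (S : Set D) : ℕ → Set D
  | 0 => extHeart t m
  | n + 1 =>
    {Z | Z ∈ extHeart t m ∧ ∃ (X₁ Z₁ : D) (f : Z ⟶ X₁) (g : X₁ ⟶ Z₁) (h : Z₁ ⟶ Z⟦(1 : ℤ)⟧),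
      (Triangle.mk f g h ∈ distTriang D) ∧ X₁ ∈ S ∧ Z₁ ∈ SubObj t m S n}

/-!
Induction on `-j`, starting from the s-condition at `j = -1`. For `j < -1`, a map
`f : X ⟶ Y⟦j⟧` factors through `Z = τ^{≤ 1}(Y⟦j⟧)`, and `Z⟦1⟧` lies in the extended heart.
Decompose it by the torsion pair as `T₀ → Z⟦1⟧ → F₀`: since `Hom(X⟦1⟧, F₀) = Hom(X, F₀⟦-1⟧) = 0`,
the map `f⟦1⟧` factors through `T₀`, and `T₀ → Z⟦1⟧ → Y⟦j + 1⟧` vanishes by induction.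
-/

lemma shift_one_mem_extHeart_of_distTriang (t : TStructure D) (m : ℕ) {Z W Q : D}
    {w : Z ⟶ W} {q : W ⟶ Q} {δ : Q ⟶ Z⟦(1 : ℤ)⟧} (hT : Triangle.mk w q δ ∈ distTriang D)
    (hZ : t.le 1 Z) (hQ : t.ge 2 Q) (hW : t.ge (2 - m) W) :
    Z⟦(1 : ℤ)⟧ ∈ extHeart t m := by
  have : t.IsGE (Q⟦(-1 : ℤ)⟧) 3 := ⟨t.ge_shift 2 (-1) 3 (by omega) Q hQ⟩
  have hQ' : t.IsGE (Q⟦(-1 : ℤ)⟧) (2 - m) := t.isGE_of_ge _ _ 3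
  have hZ' : t.ge (2 - m) Z := (t.isGE₂ _ (inv_rot_of_distTriang _ hT) _ hQ' ⟨hW⟩).ge
  exact ⟨t.le_shift 1 1 0 (by omega) Z hZ, t.ge_shift (2 - m) 1 (1 - m) (by omega) Z hZ'⟩

namespace IsSTorsionPair

variable {t : TStructure D} {m : ℕ} {T F : Set D}

lemma hom_shift_one_eq_zero (hTF : IsSTorsionPair t m T F) {X Y : D} (hX : X ∈ T)
    (hY : Y ∈ F) (φ : X⟦(1 : ℤ)⟧ ⟶ Y) : φ = 0 := by
  apply (shiftFunctor D (-1 : ℤ)).map_injective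
  rw [Functor.map_zero,
    ← cancel_epi ((shiftFunctorCompIsoId D (1 : ℤ) (-1) (by omega)).inv.app X), comp_zero]
  exact hTF.hom_neg_one_zero X hX Y hY _

lemma hom_shift_sub_one_eq_zero (hTF : IsSTorsionPair t m T F) {Y : D} (hY : Y ∈ F)
    {n : ℤ} (hn : n < 0) (h : ∀ X ∈ T, ∀ g : X ⟶ Y⟦n⟧, g = 0) {X : D} (hX : X ∈ T)
    (f : X ⟶ Y⟦n - 1⟧) : f = 0 := by
  obtain ⟨Z, Q, hZ, hQ, w, q, δ, hT⟩ := t.exists_triangle (Y⟦n - 1⟧) 1 2 rfl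
  obtain ⟨e, he⟩ : ∃ e : X ⟶ Z, f = e ≫ w := Triangle.coyoneda_exact₂ _ hT f
    (t.zero_of_isLE_of_isGE _ 0 2 (by omega) ⟨(hTF.subsetT hX).1⟩ ⟨hQ⟩)
  have hYn : t.ge (2 - m) (Y⟦n - 1⟧) :=
    t.ge_antitone (show (2 : ℤ) - m ≤ 1 - m - (n - 1) by omega) _
      (t.ge_shift (1 - m) (n - 1) _ (by omega) Y (hTF.subsetF hY).2)
  have hZheart := shift_one_mem_extHeart_of_distTriang t m hT hZ hQ hYn
  rw [hTF.heart_eq] at hZheart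
  obtain ⟨T₀, F₀, a, b, c, hT₀F₀, hT₀, hF₀⟩ := hZheart
  obtain ⟨v, hv⟩ : ∃ v : X⟦(1 : ℤ)⟧ ⟶ T₀, e⟦(1 : ℤ)⟧' = v ≫ a :=
    Triangle.coyoneda_exact₂ _ hT₀F₀ (e⟦(1 : ℤ)⟧') (hTF.hom_shift_one_eq_zero hX hF₀ _)
  have haw : a ≫ w⟦(1 : ℤ)⟧' = 0 := by
    rw [← cancel_mono ((shiftFunctorAdd' D (n - 1) 1 n (by omega)).inv.app Y), zero_comp,
      Category.assoc]
    exact h T₀ hT₀ _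
  apply (shiftFunctor D (1 : ℤ)).map_injective
  rw [Functor.map_zero, he, Functor.map_comp, hv, Category.assoc, haw, comp_zero]

lemma hom_shift_eq_zero_of_neg (hTF : IsSTorsionPair t m T F) {X Y : D} (hX : X ∈ T)
    (hY : Y ∈ F) {j : ℤ} (hj : j < 0) (f : X ⟶ Y⟦j⟧) : f = 0 := by
  induction j, (show j ≤ -1 by omega) using Int.leInductionDown generalizing X with
  | base => exact hTF.hom_neg_one_zero X hX Y hY f
  | pred n hn ih =>
    exact hTF.hom_shift_sub_one_eq_zero hY (by omega) (fun X' hX' => ih hX' (by omega)) hX f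

end IsSTorsionPair

theorem stmt2_general (t : TStructure D) (m : ℕ)
    (T F : Set D) (hTF : IsSTorsionPair t m T F) :
    ∀ X ∈ T, ∀ Y ∈ F, ∀ j : ℤ, j < 0 → ∀ f : X ⟶ Y⟦j⟧, f = 0 :=
  fun _ hX _ hY _ hj f => hTF.hom_shift_eq_zero_of_neg hX hY hj f

theorem stmt2 (t : TStructure D) (ht : t.IsBounded) (m : ℕ) (hm : 0 < m)
    (T F : Set D) (hTF : IsSTorsionPair t m T F) :
    ∀ X ∈ T, ∀ Y ∈ F, ∀ j : ℤ, j < 0 → ∀ f : X ⟶ Y⟦j⟧, f = 0 :=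
  stmt2_general t m T F hTF
end

section
/- Let (T,F) be an s-torsion pair in D^{[-(m-1),0]} and let (C^{≤0},C^{≥0}) = (D^{≤-m}*T, F[1]*D^{≥0}) be the corresponding bounded t-structure. Then F[m]*T equals the m-extended heart C^{[-(m-1),0]} = C^{≤0}∩C^{≥-(m-1)} of (C^{≤0},C^{≥0}); in particular, (F[m],T) is an s-torsion pair in C^{[-(m-1),0]}. -/
open CategoryTheory Limits Pretriangulated Triangulated

variable {D : Type*} [Category D] [Preadditive D] [HasZeroObject D] [HasShift D ℤ]
  [∀ n : ℤ, (shiftFunctor D n).Additive] [Pretriangulated D]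

/-!
An object `Z` of `C^{≤0} ∩ C^{≥0}[m-1]` has two decompositions: `A → Z → X` with `A ∈ D^{≤-m}`,
`X ∈ T`, and, shifting the one in `F[1] * D^{≥0}` by `m-1`, `P → Z → Q` with `P ∈ F[m]`,
`Q ∈ D^{≥1-m}`. As `F[m] ⊆ D^{≤-m}` and `T ⊆ D^{≥1-m}`, both are truncation triangles of `Z` at
`-m`, so `A ≅ P` and `Z ∈ F[m] * T`. The reverse inclusion and the vanishing of `Hom(F[m], T)` and
`Hom(F[m], T[-1])` come from the same degree bounds. Since `T` and `F` need not be closed under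
isomorphisms, zero objects in them are taken from a decomposition `T₀ → 0 → F₀` of `0`, where the
s-torsion condition kills `T₀ ≅ F₀[-1]`.
-/

open ZeroObject

section Star

variable {S S' T T' : Set D}

lemma star_subset_star (hS : S ⊆ S') (hT : T ⊆ T') : star S T ⊆ star S' T' := by
  rintro Z ⟨X, Y, f, g, h, hd, hX, hY⟩
  exact ⟨X, Y, f, g, h, hd, hS hX, hT hY⟩

lemma mem_star_of_iso {Z Z' : D} (e : Z ≅ Z') (hZ : Z ∈ star S T) : Z' ∈ star S T := by
  obtain ⟨X, Y, f, g, h, hd, hX, hY⟩ := hZ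
  refine ⟨X, Y, f ≫ e.hom, e.inv ≫ g, h, isomorphic_distinguished _ hd _ ?_, hX, hY⟩
  exact Triangle.isoMk (Triangle.mk (f ≫ e.hom) (e.inv ≫ g) h) (Triangle.mk f g h)
    (Iso.refl X) e.symm (Iso.refl Y) (by simp : (f ≫ e.hom) ≫ e.inv = 𝟙 X ≫ f)
    (Category.comp_id _) (by simp : h ≫ (shiftFunctor D 1).map (𝟙 X) = 𝟙 Y ≫ h)

lemma mem_star_of_mem_left {X E : D} (hX : X ∈ S) (hE : E ∈ T) (hE0 : IsZero E) :
    X ∈ star S T :=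
  ⟨X, E, 𝟙 X, 0, 0, (Triangle.distinguished_iff_of_isZero₃ _ hE0).2 (inferInstanceAs (IsIso (𝟙 X))),
    hX, hE⟩

lemma mem_star_of_mem_right {X E : D} (hE : E ∈ S) (hE0 : IsZero E) (hX : X ∈ T) :
    X ∈ star S T :=
  ⟨E, X, 0, 𝟙 X, 0, (Triangle.distinguished_iff_of_isZero₁ _ hE0).2 (inferInstanceAs (IsIso (𝟙 X))),
    hE, hX⟩

end Star

section ShiftSet

omit [Preadditive D] [HasZeroObject D] [∀ n : ℤ, (shiftFunctor D n).Additive]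
  [Pretriangulated D]

variable {S S' : Set D}

instance (S : Set D) (n : ℤ) : ObjectProperty.IsClosedUnderIsomorphisms (shiftSet S n) where
  of_iso := by
    rintro X X' e ⟨Y, hY, ⟨e'⟩⟩
    exact ⟨Y, hY, ⟨e.symm ≪≫ e'⟩⟩

lemma shift_mem_shiftSet {Y : D} (hY : Y ∈ S) (n : ℤ) : Y⟦n⟧ ∈ shiftSet S n :=
  ⟨Y, hY, ⟨Iso.refl _⟩⟩

lemma shiftSet_shiftSet_subset {a b c : ℤ} (h : a + b = c) :
    shiftSet (shiftSet S a) b ⊆ shiftSet S c := by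
  rintro X ⟨Y, ⟨W, hW, ⟨e⟩⟩, ⟨e'⟩⟩
  exact ⟨W, hW, ⟨e' ≪≫ (shiftFunctor D b).mapIso e ≪≫ (shiftFunctorAdd' D a b c h).symm.app W⟩⟩

lemma subset_shiftSet_of_shiftSet_subset {a b : ℤ} (h : a + b = 0)
    (hS : shiftSet S a ⊆ S') : S ⊆ shiftSet S' b := fun X hX ↦
  ⟨X⟦a⟧, hS (shift_mem_shiftSet hX a), ⟨((shiftFunctorCompIsoId D a b h).app X).symm⟩⟩

end ShiftSet

lemma shiftSet_star_subset {S T : Set D} (n : ℤ) :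
    shiftSet (star S T) n ⊆ star (shiftSet S n) (shiftSet T n) := by
  rintro Z ⟨W, ⟨X, Y, f, g, h, hd, hX, hY⟩, ⟨e⟩⟩
  exact mem_star_of_iso e.symm ⟨_, _, _, _, _, Triangle.shift_distinguished _ hd n,
    shift_mem_shiftSet hX n, shift_mem_shiftSet hY n⟩

section TStructure

variable (t : TStructure D) {S : Set D}

lemma shiftSet_subset_le {a n b : ℤ} (h : n + b = a)
    (hS : S ⊆ {X | t.le a X}) : shiftSet S n ⊆ {X | t.le b X} := by
  rintro X ⟨Y, hY, ⟨e⟩⟩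
  exact (t.le b).prop_of_iso e.symm (t.le_shift a n b h Y (hS hY))

lemma shiftSet_subset_ge {a n b : ℤ} (h : n + b = a)
    (hS : S ⊆ {X | t.ge a X}) : shiftSet S n ⊆ {X | t.ge b X} := by
  rintro X ⟨Y, hY, ⟨e⟩⟩
  exact (t.ge b).prop_of_iso e.symm (t.ge_shift a n b h Y (hS hY))

end TStructure

/-- Uniqueness of truncation triangles: both decompositions of `Z` are its truncation at `a`. -/
lemma star_inter_star_subset_star (t : TStructure D) {S S' T T' : Set D} (a b : ℤ) (hab : a < b)
    (hS : S ⊆ {X | t.le a X}) (hT : T ⊆ {X | t.ge b X})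
    (hS' : S' ⊆ {X | t.le a X}) (hT' : T' ⊆ {X | t.ge b X})
    [ObjectProperty.IsClosedUnderIsomorphisms S'] :
    star S T ∩ star S' T' ⊆ star S' T := by
  rintro Z ⟨⟨A, X, f, g, h, hd, hA, hX⟩, ⟨A', X', f', g', h', hd', hA', hX'⟩⟩
  obtain ⟨e, -⟩ := t.triangle_iso_exists hd hd' (Iso.refl Z) a b
    ⟨hS hA⟩ ⟨hT hX⟩ ⟨hS' hA'⟩ ⟨hT' hX'⟩ hab
  exact ⟨A, X, f, g, h, hd, ObjectProperty.prop_of_iso S' (Triangle.π₁.mapIso e).symm hA', hX⟩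

lemma IsSTorsionPair.exists_isZero_mem {t : TStructure D} {m : ℕ} {T F : Set D}
    (hTF : IsSTorsionPair t m T F) : (∃ T₀ ∈ T, IsZero T₀) ∧ ∃ F₀ ∈ F, IsZero F₀ := by
  have h0 : (0 : D) ∈ star T F := hTF.heart_eq ▸
    ⟨(t.isLE_of_isZero (isZero_zero D) 0).le, (t.isGE_of_isZero (isZero_zero D) _).ge⟩
  obtain ⟨T₀, F₀, _, _, h, hd, hT₀, hF₀⟩ := h0
  have : IsIso h := (Triangle.isZero₂_iff_isIso₃ _ hd).1 (isZero_zero D)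
  let e : T₀ ≅ F₀⟦(-1 : ℤ)⟧ :=
    (shiftEquiv D (1 : ℤ)).unitIso.app T₀ ≪≫ (shiftFunctor D (-1 : ℤ)).mapIso (asIso h).symm
  have hT₀0 : IsZero T₀ := by
    rw [IsZero.iff_id_eq_zero, ← e.hom_inv_id, hTF.hom_neg_one_zero _ hT₀ _ hF₀ e.hom, zero_comp]
  exact ⟨⟨T₀, hT₀, hT₀0⟩, ⟨F₀, hF₀, (Functor.map_isZero _ hT₀0).of_iso (asIso h)⟩⟩

theorem stmt3_general (t : TStructure D) (m : ℕ)
    (T F : Set D) (hTF : IsSTorsionPair t m T F)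
    -- the corresponding t-structure:  C^{≤0} and C^{≥0} ( = C^{≥ 0}),
    -- with C^{≥ -(m-1)} = C^{≥ 0}[m-1]
    (CLE CGE CHeart : Set D)
    (hCLE : CLE = star {X | t.le (-(m : ℤ)) X} T)
    (hCGE : CGE = star (shiftSet F 1) {X | t.ge 0 X})
    (hCHeart : CHeart = CLE ∩ shiftSet CGE ((m : ℤ) - 1)) :
    star (shiftSet F (m : ℤ)) T = CHeart ∧
    -- `(F[m], T)` is an s-torsion pair in `C^{[-(m-1),0]}`:
    shiftSet F (m : ℤ) ⊆ CHeart ∧ T ⊆ CHeart ∧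
    (∀ X ∈ shiftSet F (m : ℤ), ∀ Y ∈ T, ∀ f : X ⟶ Y, f = 0) ∧
    (∀ X ∈ shiftSet F (m : ℤ), ∀ Y ∈ T, ∀ f : X ⟶ Y⟦(-1 : ℤ)⟧, f = 0) ∧
    CHeart = star (shiftSet F (m : ℤ)) T := by
  subst hCLE hCGE hCHeart
  obtain ⟨⟨T₀, hT₀, hT₀0⟩, ⟨F₀, hF₀, hF₀0⟩⟩ := hTF.exists_isZero_mem
  have hFm : shiftSet F m ⊆ {X | t.le (-(m : ℤ)) X} :=
    shiftSet_subset_le t (by omega) fun _ hX ↦ (hTF.subsetF hX).1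
  have hT : T ⊆ {X | t.ge (1 - (m : ℤ)) X} := fun _ hX ↦ (hTF.subsetT hX).2
  have hstar_sub : star (shiftSet F m) T ⊆
      shiftSet (star (shiftSet F 1) {X | t.ge 0 X}) ((m : ℤ) - 1) :=
    subset_shiftSet_of_shiftSet_subset (a := 1 - (m : ℤ)) (by omega) <|
      (shiftSet_star_subset _).trans <|
        star_subset_star (shiftSet_shiftSet_subset (by omega)) (shiftSet_subset_ge t (by omega) hT)
  have hsub_star : shiftSet (star (shiftSet F 1) {X | t.ge 0 X}) ((m : ℤ) - 1) ⊆
      star (shiftSet F m) {X | t.ge (1 - (m : ℤ)) X} :=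
    (shiftSet_star_subset _).trans <| star_subset_star (shiftSet_shiftSet_subset (by omega))
      (shiftSet_subset_ge t (by omega) le_rfl)
  have heq : star (shiftSet F m) T = star {X | t.le (-(m : ℤ)) X} T ∩
      shiftSet (star (shiftSet F 1) {X | t.ge 0 X}) ((m : ℤ) - 1) :=
    subset_antisymm (fun Z hZ ↦ ⟨star_subset_star hFm le_rfl hZ, hstar_sub hZ⟩)
      fun Z ⟨hZ, hZ'⟩ ↦ star_inter_star_subset_star t (-(m : ℤ)) (1 - (m : ℤ)) (by omega)
        (fun _ h ↦ h) hT hFm (fun _ h ↦ h) ⟨hZ, hsub_star hZ'⟩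
  refine ⟨heq, heq ▸ fun X hX ↦ mem_star_of_mem_left hX hT₀ hT₀0,
    heq ▸ fun X hX ↦ mem_star_of_mem_right (shift_mem_shiftSet hF₀ m)
      (Functor.map_isZero _ hF₀0) hX,
    fun X hX Y hY f ↦ t.zero_of_isLE_of_isGE f (-(m : ℤ)) (1 - (m : ℤ)) (by omega)
      ⟨hFm hX⟩ ⟨hT hY⟩,
    fun X hX Y hY f ↦ t.zero_of_isLE_of_isGE f (-(m : ℤ)) (2 - (m : ℤ)) (by omega)
      ⟨hFm hX⟩ ⟨t.ge_shift _ (-1) _ (by omega) Y (hT hY)⟩, heq.symm⟩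

theorem stmt3 (t : TStructure D) (ht : t.IsBounded) (m : ℕ) (hm : 0 < m)
    (T F : Set D) (hTF : IsSTorsionPair t m T F)
    -- the corresponding t-structure:  C^{≤0} and C^{≥0} ( = C^{≥ 0}),
    -- with C^{≥ -(m-1)} = C^{≥ 0}[m-1]
    (CLE CGE CHeart : Set D)
    (hCLE : CLE = star {X | t.le (-(m : ℤ)) X} T)
    (hCGE : CGE = star (shiftSet F 1) {X | t.ge 0 X})
    (hCHeart : CHeart = CLE ∩ shiftSet CGE ((m : ℤ) - 1)) :
    star (shiftSet F (m : ℤ)) T = CHeart ∧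
    -- `(F[m], T)` is an s-torsion pair in `C^{[-(m-1),0]}`:
    shiftSet F (m : ℤ) ⊆ CHeart ∧ T ⊆ CHeart ∧
    (∀ X ∈ shiftSet F (m : ℤ), ∀ Y ∈ T, ∀ f : X ⟶ Y, f = 0) ∧
    (∀ X ∈ shiftSet F (m : ℤ), ∀ Y ∈ T, ∀ f : X ⟶ Y⟦(-1 : ℤ)⟧, f = 0) ∧
    CHeart = star (shiftSet F (m : ℤ)) T :=
  stmt3_general t m T F hTF CLE CGE CHeart hCLE hCGE hCHeart
end

section
/- Let X be a full subcategory of the m-extended heart D^{[-(m-1),0]}. Then for any object X in X, the truncation H^{[-(m-2),0]}(X) belongs to Fac_m(X). -/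
open CategoryTheory Limits Pretriangulated Triangulated

variable {D : Type*} [Category D] [Preadditive D] [HasZeroObject D] [HasShift D ℤ]
  [∀ n : ℤ, (shiftFunctor D n).Additive] [Pretriangulated D]

/-!
The truncation `H^{[2-m,0]}(X)` enters through its truncation triangle `W → X → HX → W⟦1⟧`,
`W ∈ D^{[1-m,1-m]}`, so it suffices to show `W ∈ Fac_{m-1}(𝒳)`. Fix `X ∈ 𝒳`. By induction on `n`,
every `V ∈ D^{[1-m,-n]}` and its sum `X ⊞ V` lie in `Fac_n(𝒳)`: the split triangles
`X ⊞ V⟦-1⟧ → X → V → ⋯` and `V⟦-1⟧ → X → X ⊞ V → ⋯` reduce each claim to the other one for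
`V⟦-1⟧ ∈ D^{[1-m,-(n-1)]}`.
-/

variable {t : TStructure D} {m : ℕ} {S : Set D}

lemma mem_extHeart_of_iso {Z Z' : D} (e : Z ≅ Z') (hZ : Z ∈ extHeart t m) :
    Z' ∈ extHeart t m :=
  ⟨(t.le 0).prop_of_iso e hZ.1, (t.ge _).prop_of_iso e hZ.2⟩

lemma mem_extHeart₂ {T : Triangle D} (hT : T ∈ distTriang D)
    (h₁ : T.obj₁ ∈ extHeart t m) (h₃ : T.obj₃ ∈ extHeart t m) : T.obj₂ ∈ extHeart t m :=
  ⟨(t.isLE₂ T hT 0 ⟨h₁.1⟩ ⟨h₃.1⟩).le, (t.isGE₂ T hT _ ⟨h₁.2⟩ ⟨h₃.2⟩).ge⟩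

lemma biprod_mem_extHeart {X V : D} (hX : X ∈ extHeart t m) (hV : V ∈ extHeart t m) :
    (X ⊞ V) ∈ extHeart t m :=
  mem_extHeart₂ (binaryBiproductTriangle_distinguished X V) hX hV

lemma mem_Fac_of_iso {Z Z' : D} (e : Z ≅ Z') : ∀ {n : ℕ}, Z ∈ Fac t m S n → Z' ∈ Fac t m S n
  | 0, hZ => mem_extHeart_of_iso e hZ
  | _ + 1, ⟨hZ, Z₁, X₁, f, g, h, hT, hX₁, hZ₁⟩ => by
    refine ⟨mem_extHeart_of_iso e hZ, Z₁, X₁, f, g ≫ e.hom, e.inv ≫ h,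
      isomorphic_distinguished _ hT _ ?_, hX₁, hZ₁⟩
    exact Triangle.isoMk _ _ (Iso.refl _) (Iso.refl _) e.symm
      (by simp [Triangle.mk]) (by simp [Triangle.mk]) (by simp [Triangle.mk])

lemma biprod_mem_Fac_succ {X V : D} {n : ℕ} (hX : X ∈ S) (hV : V⟦(-1 : ℤ)⟧ ∈ Fac t m S n)
    (hXV : (X ⊞ V) ∈ extHeart t m) : (X ⊞ V) ∈ Fac t m S (n + 1) :=
  ⟨hXV, _, X, _, _, _, inv_rot_of_distTriang _ (binaryBiproductTriangle_distinguished X V),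
    hX, hV⟩

lemma mem_Fac_succ_of_biprod_shift {X V : D} {n : ℕ} (hX : X ∈ S)
    (hXV : (X ⊞ V⟦(-1 : ℤ)⟧) ∈ Fac t m S n) (hV : V ∈ extHeart t m) : V ∈ Fac t m S (n + 1) := by
  have e : V⟦(-1 : ℤ)⟧⟦(1 : ℤ)⟧ ≅ V := (shiftFunctorCompIsoId D (-1 : ℤ) 1 (by norm_num)).app V
  refine mem_Fac_of_iso e ⟨mem_extHeart_of_iso e.symm hV, _, X, _, _, _,
    rot_of_distTriang _ (binaryBiproductTriangle_distinguished (V⟦(-1 : ℤ)⟧) X), hX, ?_⟩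
  exact mem_Fac_of_iso (biprod.braiding _ _) hXV

lemma shift_neg_one_le {a b : ℤ} (hab : a + 1 = b) {V : D} (hV : t.le a V) :
    t.le b (V⟦(-1 : ℤ)⟧) :=
  t.le_shift a (-1) b (by omega) V hV

lemma shift_neg_one_ge {a : ℤ} {V : D} (hV : t.ge a V) : t.ge a (V⟦(-1 : ℤ)⟧) :=
  t.ge_antitone (show a ≤ a + 1 by omega) _ (t.ge_shift a (-1) (a + 1) (by omega) V hV)

lemma mem_Fac_and_biprod_mem_Fac {X : D} (hX : X ∈ S) (hXheart : X ∈ extHeart t m) :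
    ∀ (n : ℕ) {V : D}, t.le (-(n : ℤ)) V → t.ge (1 - (m : ℤ)) V →
      V ∈ Fac t m S n ∧ (X ⊞ V) ∈ Fac t m S n
  | 0, V, hle, hge => by
    have hV : V ∈ extHeart t m := ⟨by rwa [Nat.cast_zero, neg_zero] at hle, hge⟩
    exact ⟨hV, biprod_mem_extHeart hXheart hV⟩
  | n + 1, V, hle, hge => by
    have hV : V ∈ extHeart t m := ⟨t.le_monotone (by omega) _ hle, hge⟩
    have ih := mem_Fac_and_biprod_mem_Fac hX hXheart n
      (shift_neg_one_le (by push_cast; ring) hle) (shift_neg_one_ge hge)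
    exact ⟨mem_Fac_succ_of_biprod_shift hX ih.2 hV,
      biprod_mem_Fac_succ hX ih.1 (biprod_mem_extHeart hXheart hV)⟩

theorem stmt4_general (t : TStructure D) (m : ℕ) (hm : 0 < m)
    (𝒳 : Set D) (h𝒳 : 𝒳 ⊆ extHeart t m) (X : D) (hX : X ∈ 𝒳)
    (W HX : D) (f : W ⟶ X) (g : X ⟶ HX) (h : HX ⟶ W⟦(1 : ℤ)⟧)
    (hTri : Triangle.mk f g h ∈ distTriang D)
    (hW : t.le (1 - (m : ℤ)) W ∧ t.ge (1 - (m : ℤ)) W)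
    (hHX : t.le 0 HX ∧ t.ge (2 - (m : ℤ)) HX) :
    HX ∈ Fac t m 𝒳 m := by
  obtain ⟨k, rfl⟩ : ∃ k, m = k + 1 := ⟨m - 1, by omega⟩
  have hWmem : W ∈ Fac t (k + 1) 𝒳 k :=
    (mem_Fac_and_biprod_mem_Fac hX (h𝒳 hX) k (by simpa using hW.1) hW.2).1
  have hHXheart : HX ∈ extHeart t (k + 1) :=
    ⟨hHX.1, t.ge_antitone (by omega) _ hHX.2⟩
  exact ⟨hHXheart, W, X, f, g, h, hTri, hX, hWmem⟩

theorem stmt4 (t : TStructure D) (ht : t.IsBounded) (m : ℕ) (hm : 0 < m)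
    (𝒳 : Set D) (h𝒳 : 𝒳 ⊆ extHeart t m) (X : D) (hX : X ∈ 𝒳)
    (W HX : D) (f : W ⟶ X) (g : X ⟶ HX) (h : HX ⟶ W⟦(1 : ℤ)⟧)
    (hTri : Triangle.mk f g h ∈ distTriang D)
    (hW : t.le (1 - (m : ℤ)) W ∧ t.ge (1 - (m : ℤ)) W)
    (hHX : t.le 0 HX ∧ t.ge (2 - (m : ℤ)) HX) :
    HX ∈ Fac t m 𝒳 m :=
  stmt4_general t m hm 𝒳 h𝒳 X hX W HX f g h hTri hW hHX
end

section
/- Let X be a full subcategory of D^{[-(m-1),0]} and Y an object of D^{[-(m-1),0]}. If Hom(X,Y[j])=0 for every X∈X and every integer j≤0, then Hom(Z,Y[j])=0 for every Z∈Fac_m(X) and every integer j≤0. -/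
open CategoryTheory Limits Pretriangulated Triangulated

variable {D : Type*} [Category D] [Preadditive D] [HasZeroObject D] [HasShift D ℤ]
  [∀ n : ℤ, (shiftFunctor D n).Additive] [Pretriangulated D]

/-!
A map `Z₀ → Y[j]` vanishes on `X₁` (as `j ≤ 0`), so it factors through `Z₁[1]`
and comes from a map `Z₁ → Y[j-1]`. Iterating along the `m` triangles that
exhibit `Z₀ ∈ Fac_m(𝒳)` lowers the shift to `j - m`, and then
`Hom(Z_m, Y[j-m]) = 0` because `Z_m ∈ D^{≤0}` while `Y[j-m] ∈ D^{≥ 1-j} ⊆ D^{≥1}`.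
-/

lemma hom_obj₃_eq_zero_of_distTriang {T : Triangle D} (hT : T ∈ distTriang D) {W : D}
    (h₂ : ∀ u : T.obj₂ ⟶ W, u = 0) (h₁ : ∀ v : T.obj₁⟦(1 : ℤ)⟧ ⟶ W, v = 0)
    (f : T.obj₃ ⟶ W) : f = 0 := by
  obtain ⟨v, rfl⟩ := Triangle.yoneda_exact₃ T hT f (h₂ _)
  rw [h₁ v, comp_zero]

lemma shift_hom_shift_eq_zero {C : Type*} [Category C] [HasZeroMorphisms C] [HasShift C ℤ]
    {A Y : C} {k a j : ℤ} (hj : k + a = j)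
    (h : ∀ g : A ⟶ Y⟦k⟧, g = 0) (g : A⟦a⟧ ⟶ Y⟦j⟧) : g = 0 := by
  let e : Y⟦j⟧ ≅ Y⟦k⟧⟦a⟧ := (shiftFunctorAdd' C k a j hj).app Y
  have hg : g ≫ e.hom = 0 := by
    rw [← (shiftFunctor C a).map_preimage (g ≫ e.hom), h ((shiftFunctor C a).preimage _),
      Functor.map_zero]
  simpa using hg =≫ e.inv

lemma hom_shift_eq_zero_of_mem_Fac (t : TStructure D) (m : ℕ) {S : Set D} {Y : D} {b : ℤ}
    (hY : t.ge b Y) (hS : ∀ X ∈ S, ∀ j : ℤ, j ≤ 0 → ∀ f : X ⟶ Y⟦j⟧, f = 0) :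
    ∀ (n : ℕ), ∀ Z ∈ Fac t m S n, ∀ j : ℤ, j ≤ 0 → j < b + n → ∀ f : Z ⟶ Y⟦j⟧, f = 0
  | 0, Z, hZ, j, _, hj, f =>
    t.zero_of_isLE_of_isGE f 0 (b - j) (by omega) ⟨hZ.1⟩ ⟨t.ge_shift b j (b - j) (by omega) Y hY⟩
  | n + 1, Z, ⟨_, Z₁, X₁, _, _, _, hT, hX₁, hZ₁⟩, j, hj₀, hj, f =>
    hom_obj₃_eq_zero_of_distTriang hT (hS X₁ hX₁ j hj₀)
      (shift_hom_shift_eq_zero (by omega : (j - 1) + 1 = j)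
        (hom_shift_eq_zero_of_mem_Fac t m hY hS n Z₁ hZ₁ (j - 1) (by omega) (by omega))) f

theorem stmt6_general (t : TStructure D) (m : ℕ)
    (𝒳 : Set D) (Y : D) (hY : Y ∈ extHeart t m)
    (hvan : ∀ X ∈ 𝒳, ∀ j : ℤ, j ≤ 0 → ∀ f : X ⟶ Y⟦j⟧, f = 0) :
    ∀ Z ∈ Fac t m 𝒳 m, ∀ j : ℤ, j ≤ 0 → ∀ f : Z ⟶ Y⟦j⟧, f = 0 :=
  fun Z hZ j hj => hom_shift_eq_zero_of_mem_Fac t m hY.2 hvan m Z hZ j hj (by omega)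

theorem stmt6 (t : TStructure D) (ht : t.IsBounded) (m : ℕ) (hm : 0 < m)
    (𝒳 : Set D) (h𝒳 : 𝒳 ⊆ extHeart t m) (Y : D) (hY : Y ∈ extHeart t m)
    (hvan : ∀ X ∈ 𝒳, ∀ j : ℤ, j ≤ 0 → ∀ f : X ⟶ Y⟦j⟧, f = 0) :
    ∀ Z ∈ Fac t m 𝒳 m, ∀ j : ℤ, j ≤ 0 → ∀ f : Z ⟶ Y⟦j⟧, f = 0 :=
  stmt6_general t m 𝒳 Y hY hvan
end

section
/- Let P be an (m+1)-term complex of finitely generated projective A-modules. For any X ∈ m-mod A there are functorial isomorphisms Hom(P,X[j]) ≅ Hom(H^{[-(m-1),0]}(P),X[j]) for all integers j≤0, and a monomorphism Hom(H^{[-(m-1),0]}(P),X[1]) ↪ Hom(P,X[1]). -/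
open CategoryTheory Limits Pretriangulated Triangulated

variable {k : Type*} [Field k]
variable {D : Type*} [Category D] [Preadditive D] [CategoryTheory.Linear k D]
  [HasZeroObject D] [HasShift D ℤ] [∀ n : ℤ, (shiftFunctor D n).Additive]
  [Pretriangulated D] [HasFiniteBiproducts D]

/-- `addHull M` is the additive hull `add M` of `M`: all direct summands of
finite direct sums of copies of `M`. -/
def addHull (M : D) : Set D :=
  {X | ∃ (n : ℕ) (i : X ⟶ ⨁ fun _ : Fin n => M) (r : (⨁ fun _ : Fin n => M) ⟶ X),
    i ≫ r = 𝟙 X}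

/-- `X` is a projective object of the extension-closed subcategory `E`,
i.e. `X ∈ E` and `Hom(X, Y⟦1⟧) = 0` for all `Y ∈ E`. -/
def ProjIn (E : Set D) (X : D) : Prop :=
  X ∈ E ∧ ∀ Y ∈ E, ∀ f : X ⟶ Y⟦(1 : ℤ)⟧, f = 0

/-- `X` is an injective object of the extension-closed subcategory `E`,
i.e. `X ∈ E` and `Hom(Y, X⟦1⟧) = 0` for all `Y ∈ E`. -/
def InjIn (E : Set D) (X : D) : Prop :=
  X ∈ E ∧ ∀ Y ∈ E, ∀ f : Y ⟶ X⟦(1 : ℤ)⟧, f = 0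

/-- An axiomatization of the bounded derived category `D = D^b(mod A)` of a
finite-dimensional algebra `A` over the field `k`, recording:

* the canonical (bounded) t-structure `t`, with truncation functions
  `trLE n = σ^{≤ n}` and `trGE n = σ^{≥ n}` (characterized by the usual
  truncation triangles);
* the classes `projC a b` (resp. `injC a b`) of objects isomorphic in
  `D^b(mod A)` to a complex of finitely generated projective (resp. injective)
  modules concentrated in cohomological degrees `[a, b]`, together with the
  basic properties of such complexes (cohomological amplitude, vanishing of
  maps to sufficiently negative (resp. from sufficiently positive) objects,
  behaviour under shifts, direct sums and summands);
* the object `AA` corresponding to the free module `A`, which additively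
  generates `projC 0 0 = proj A`, and `nakF AA = νA = DA` generating
  `injC 0 0 = inj A`;
* the Nakayama functor, recorded through its value function `nakF` on objects
  of `K^b(proj A)` (with quasi-inverse value function `nakInvF`), together
  with the Nakayama duality `Hom(X, Y) ≅ D Hom(Y, νX)`, `D = Hom_k(-, k)`,
  natural in `Y`;
* the minimal projective presentation function `pm m`, where `pm m Z` is the
  stupid truncation `σ_{≥ -m}` of a minimal projective resolution of
  `Z ∈ m-mod A` (an object of `K^{[-m,0]}(proj A)` with
  `H^{[-(m-1),0]}(pm m Z) ≅ Z` having no direct summand of the form `Q⟦m⟧`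
  with `Q ∈ proj A`), and dually the minimal injective presentation
  function `im m`. -/
structure ExtModSetting (k : Type*) [Field k] (D : Type*) [Category D]
    [Preadditive D] [CategoryTheory.Linear k D] [HasZeroObject D] [HasShift D ℤ]
    [∀ n : ℤ, (shiftFunctor D n).Additive] [Pretriangulated D]
    [HasFiniteBiproducts D] : Type _ where
  t : TStructure D
  bounded : ∀ X : D, ∃ a b : ℤ, t.ge a X ∧ t.le b X
  homFinite : ∀ X Y : D, FiniteDimensional k (X ⟶ Y)
  trLE : ℤ → D → D
  trLE_le : ∀ (n : ℤ) (X : D), t.le n (trLE n X)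
  trLE_triangle : ∀ (n : ℤ) (X : D), ∃ (W : D) (f : trLE n X ⟶ X) (g : X ⟶ W)
    (h : W ⟶ (trLE n X)⟦(1 : ℤ)⟧),
    (Triangle.mk f g h ∈ distTriang D) ∧ t.ge (n + 1) W
  trGE : ℤ → D → D
  trGE_ge : ∀ (n : ℤ) (X : D), t.ge n (trGE n X)
  trGE_triangle : ∀ (n : ℤ) (X : D), ∃ (W : D) (f : W ⟶ X) (g : X ⟶ trGE n X)
    (h : trGE n X ⟶ W⟦(1 : ℤ)⟧),
    (Triangle.mk f g h ∈ distTriang D) ∧ t.le (n - 1) W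
  projC : ℤ → ℤ → Set D
  injC : ℤ → ℤ → Set D
  projC_iso : ∀ (a b : ℤ) (X Y : D), X ∈ projC a b → (X ≅ Y) → Y ∈ projC a b
  injC_iso : ∀ (a b : ℤ) (X Y : D), X ∈ injC a b → (X ≅ Y) → Y ∈ injC a b
  projC_mono : ∀ a a' b b' : ℤ, a' ≤ a → b ≤ b' → projC a b ⊆ projC a' b'
  injC_mono : ∀ a a' b b' : ℤ, a' ≤ a → b ≤ b' → injC a b ⊆ injC a' b'
  projC_amp : ∀ (a b : ℤ) (X : D), X ∈ projC a b → t.ge a X ∧ t.le b X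
  injC_amp : ∀ (a b : ℤ) (X : D), X ∈ injC a b → t.ge a X ∧ t.le b X
  projC_shift : ∀ (a b n : ℤ) (X : D), X ∈ projC a b → X⟦n⟧ ∈ projC (a - n) (b - n)
  injC_shift : ∀ (a b n : ℤ) (X : D), X ∈ injC a b → X⟦n⟧ ∈ injC (a - n) (b - n)
  projC_sum : ∀ (a b : ℤ) (X Y : D), X ∈ projC a b → Y ∈ projC a b → (X ⊞ Y) ∈ projC a b
  injC_sum : ∀ (a b : ℤ) (X Y : D), X ∈ injC a b → Y ∈ injC a b → (X ⊞ Y) ∈ injC a b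
  projC_summand : ∀ (a b : ℤ) (X Y : D), Y ∈ projC a b →
    (∃ (i : X ⟶ Y) (r : Y ⟶ X), i ≫ r = 𝟙 X) → X ∈ projC a b
  injC_summand : ∀ (a b : ℤ) (X Y : D), Y ∈ injC a b →
    (∃ (i : X ⟶ Y) (r : Y ⟶ X), i ≫ r = 𝟙 X) → X ∈ injC a b
  projC_vanish : ∀ (a b : ℤ) (X Y : D), X ∈ projC a b → t.le (a - 1) Y →
    ∀ f : X ⟶ Y, f = 0
  injC_vanish : ∀ (a b : ℤ) (X Y : D), Y ∈ injC a b → t.ge (b + 1) X →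
    ∀ f : X ⟶ Y, f = 0
  AA : D
  AA_mem : AA ∈ projC 0 0
  projC_zero_zero : ∀ X : D, X ∈ projC 0 0 ↔ X ∈ addHull AA
  nakF : D → D
  nakF_mem : ∀ (a b : ℤ) (X : D), X ∈ projC a b → nakF X ∈ injC a b
  injC_zero_zero : ∀ X : D, X ∈ injC 0 0 ↔ X ∈ addHull (nakF AA)
  nakInvF : D → D
  nakInvF_mem : ∀ (a b : ℤ) (Y : D), Y ∈ injC a b → nakInvF Y ∈ projC a b
  nakF_nakInvF : ∀ (a b : ℤ) (Y : D), Y ∈ injC a b → Nonempty (nakF (nakInvF Y) ≅ Y)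
  nakDuality : ∀ X : D, (∃ a b : ℤ, X ∈ projC a b) →
    ∃ e : ∀ Y : D, (X ⟶ Y) ≃ₗ[k] Module.Dual k (Y ⟶ nakF X),
      ∀ (Y Y' : D) (v : Y ⟶ Y') (u : X ⟶ Y) (g : Y' ⟶ nakF X),
        e Y' (u ≫ v) g = e Y u (v ≫ g)
  pm : ℤ → D → D
  pm_mem : ∀ (m : ℤ) (Z : D), 1 ≤ m → t.le 0 Z → t.ge (1 - m) Z →
    pm m Z ∈ projC (-m) 0
  pm_triangle : ∀ (m : ℤ) (Z : D), 1 ≤ m → t.le 0 Z → t.ge (1 - m) Z →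
    ∃ (W : D) (f : W ⟶ pm m Z) (g : pm m Z ⟶ Z) (h : Z ⟶ W⟦(1 : ℤ)⟧),
      (Triangle.mk f g h ∈ distTriang D) ∧ t.le (-m) W ∧ t.ge (-m) W
  pm_minimal : ∀ (m : ℤ) (Z : D), 1 ≤ m → t.le 0 Z → t.ge (1 - m) Z →
    ∀ Q : D, Q ∈ projC 0 0 →
      (∃ (i : Q⟦m⟧ ⟶ pm m Z) (r : pm m Z ⟶ Q⟦m⟧), i ≫ r = 𝟙 (Q⟦m⟧)) → IsZero Q
  im : ℤ → D → D
  im_mem : ∀ (m : ℤ) (Z : D), 1 ≤ m → t.le 0 Z → t.ge (1 - m) Z →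
    im m Z ∈ injC (1 - m) 1
  im_triangle : ∀ (m : ℤ) (Z : D), 1 ≤ m → t.le 0 Z → t.ge (1 - m) Z →
    ∃ (f : Z ⟶ im m Z) (W : D) (g : im m Z ⟶ W) (h : W ⟶ Z⟦(1 : ℤ)⟧),
      (Triangle.mk f g h ∈ distTriang D) ∧ t.le 1 W ∧ t.ge 1 W
  im_minimal : ∀ (m : ℤ) (Z : D), 1 ≤ m → t.le 0 Z → t.ge (1 - m) Z →
    ∀ I : D, I ∈ injC 0 0 →
      (∃ (i : I⟦(-1 : ℤ)⟧ ⟶ im m Z) (r : im m Z ⟶ I⟦(-1 : ℤ)⟧),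
        i ≫ r = 𝟙 (I⟦(-1 : ℤ)⟧)) → IsZero I

namespace ExtModSetting

variable (S : ExtModSetting k D)

/-- The `m`-extended module category
`m-mod A = {X ∈ D^b(mod A) | Hᵢ(X) = 0 for i ∉ [-(m-1), 0]}`. -/
def emod (m : ℕ) : Set D := {X | S.t.le 0 X ∧ S.t.ge (1 - (m : ℤ)) X}

/-- The truncation `H^{[p,q]} = σ^{≥ p} ∘ σ^{≤ q}`. -/
def hTr (p q : ℤ) (X : D) : D := S.trGE p (S.trLE q X)

/-- `Fac S m 𝒳 n` is the class of `n`-factors of `𝒳` inside `m-mod A`. -/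
def Fac (m : ℕ) (𝒳 : Set D) : ℕ → Set D
  | 0 => S.emod m
  | n + 1 =>
    {Z | Z ∈ S.emod m ∧ ∃ (Z₁ X₁ : D) (f : Z₁ ⟶ X₁) (g : X₁ ⟶ Z) (h : Z ⟶ Z₁⟦(1 : ℤ)⟧),
      (Triangle.mk f g h ∈ distTriang D) ∧ X₁ ∈ 𝒳 ∧ Z₁ ∈ Fac m 𝒳 n}

/-- `SubObj S m 𝒳 n` is the class of `n`-subobjects of `𝒳` inside `m-mod A`. -/
def SubObj (m : ℕ) (𝒳 : Set D) : ℕ → Set D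
  | 0 => S.emod m
  | n + 1 =>
    {Z | Z ∈ S.emod m ∧ ∃ (X₁ Z₁ : D) (f : Z ⟶ X₁) (g : X₁ ⟶ Z₁) (h : Z₁ ⟶ Z⟦(1 : ℤ)⟧),
      (Triangle.mk f g h ∈ distTriang D) ∧ X₁ ∈ 𝒳 ∧ Z₁ ∈ SubObj m 𝒳 n}

/-- `T(P) = {X ∈ m-mod A | Hom(P, X[j]) = 0 for all j ≥ 1}`. -/
def TP (m : ℕ) (P : D) : Set D :=
  {X | X ∈ S.emod m ∧ ∀ j : ℤ, 1 ≤ j → ∀ f : P ⟶ X⟦j⟧, f = 0}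

/-- `F(P) = {X ∈ m-mod A | Hom(P, X[j]) = 0 for all j ≤ 0}`. -/
def FP (m : ℕ) (P : D) : Set D :=
  {X | X ∈ S.emod m ∧ ∀ j : ℤ, j ≤ 0 → ∀ f : P ⟶ X⟦j⟧, f = 0}

/-- A complex is presilting if `Hom(P, P[j]) = 0` for all `j > 0`. -/
def Presilting (P : D) : Prop := ∀ j : ℤ, 0 < j → ∀ f : P ⟶ P⟦j⟧, f = 0

/-- The objects of `K^b(proj A)`. -/
def Kb : Set D := {X | ∃ a b : ℤ, X ∈ S.projC a b}

/-- A thick subcategory: closed under isomorphisms, shifts, extensions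
(hence cones) and direct summands. -/
def IsThickSub (T : Set D) : Prop :=
  (∀ X Y : D, X ∈ T → (X ≅ Y) → Y ∈ T) ∧
  (∀ (X : D) (n : ℤ), X ∈ T → X⟦n⟧ ∈ T) ∧
  (∀ (X Y Z : D) (f : X ⟶ Y) (g : Y ⟶ Z) (h : Z ⟶ X⟦(1 : ℤ)⟧),
    (Triangle.mk f g h ∈ distTriang D) → X ∈ T → Z ∈ T → Y ∈ T) ∧
  (∀ X Y : D, Y ∈ T → (∃ (i : X ⟶ Y) (r : Y ⟶ X), i ≫ r = 𝟙 X) → X ∈ T)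

/-- A presilting complex is silting if the smallest thick subcategory
containing it is all of `K^b(proj A)`. -/
def Silting (P : D) : Prop :=
  Presilting P ∧ ∀ T : Set D, IsThickSub T → P ∈ T → S.Kb ⊆ T

/-- A torsion pair in `m-mod A`. -/
structure IsTorsionPair (m : ℕ) (T F : Set D) : Prop where
  subsetT : T ⊆ S.emod m
  subsetF : F ⊆ S.emod m
  hom_zero : ∀ X ∈ T, ∀ Y ∈ F, ∀ f : X ⟶ Y, f = 0
  heart_eq : S.emod m = star T F

/-- An s-torsion pair in `m-mod A`. -/
structure IsSTorsionPair (m : ℕ) (T F : Set D)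
    extends S.IsTorsionPair m T F : Prop where
  hom_neg_one_zero : ∀ X ∈ T, ∀ Y ∈ F, ∀ f : X ⟶ Y⟦(-1 : ℤ)⟧, f = 0

/-- The Auslander-Reiten translation
`τ_[m](Z) = σ^{≤ 0}(ν p_m(Z)[-1])` of `m-mod A`. -/
def tau (m : ℕ) (Z : D) : D := S.trLE 0 ((S.nakF (S.pm (m : ℤ) Z))⟦(-1 : ℤ)⟧)

/-- The inverse Auslander-Reiten translation
`τ_[m]⁻(Z) = σ^{≥ -(m-1)}(ν⁻ i_m(Z)[1])` of `m-mod A`. -/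
def tauInv (m : ℕ) (Z : D) : D := S.trGE (1 - (m : ℤ)) ((S.nakInvF (S.im (m : ℤ) Z))⟦(1 : ℤ)⟧)

end ExtModSetting

/-!
`W = H^{-m}(P)[m]` is concentrated in degree `-m`, while `X⟦j⟧` lives in degrees
`≥ 1 - m - j`. Hence `Hom(W⟦1⟧, X⟦j⟧) = 0` for `j ≤ 1` and `Hom(W, X⟦j⟧) = 0` for `j ≤ 0`, and the
long exact `Hom(-, X⟦j⟧)` sequence of the triangle `W → P → HP → W⟦1⟧` gives the claims.
-/

namespace CategoryTheory

variable {C : Type*} [Category C] [Preadditive C] [HasZeroObject C] [HasShift C ℤ]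
  [∀ n : ℤ, (shiftFunctor C n).Additive] [Pretriangulated C]

lemma Triangulated.TStructure.eq_zero_of_le_of_ge_shift (t : TStructure C) {X Y : C}
    {a b j : ℤ} (hX : t.le a X) (hY : t.ge b Y) (hab : a + j < b) (f : X ⟶ Y⟦j⟧) : f = 0 :=
  t.zero_of_isLE_of_isGE f a (b - j) (by omega) ⟨hX⟩ ⟨t.ge_shift b j (b - j) (by omega) Y hY⟩

namespace Pretriangulated

variable {T : Triangle C} {X : C}

lemma precomp_mor₂_injective (hT : T ∈ distTriang C) (hX : ∀ f : T.obj₁⟦(1 : ℤ)⟧ ⟶ X, f = 0) :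
    Function.Injective fun u : T.obj₃ ⟶ X => T.mor₂ ≫ u := by
  intro u₁ u₂ hu
  obtain ⟨v, hv⟩ := Triangle.yoneda_exact₃ T hT (u₁ - u₂) (by simpa [sub_eq_zero] using hu)
  rw [← sub_eq_zero, hv, hX v, comp_zero]

lemma precomp_mor₂_surjective (hT : T ∈ distTriang C) (hX : ∀ f : T.obj₁ ⟶ X, f = 0) :
    Function.Surjective fun u : T.obj₃ ⟶ X => T.mor₂ ≫ u := fun f =>
  (Triangle.yoneda_exact₂ T hT f (hX _)).imp fun _ hu => hu.symm

end Pretriangulated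

end CategoryTheory

theorem stmt7_general (S : ExtModSetting k D) (m : ℕ) (P : D)
    (W HP : D) (w : W ⟶ P) (g : P ⟶ HP) (h : HP ⟶ W⟦(1 : ℤ)⟧)
    (hTri : Triangle.mk w g h ∈ distTriang D)
    (hW : S.t.le (-(m : ℤ)) W ∧ S.t.ge (-(m : ℤ)) W) :
    (∀ j : ℤ, j ≤ 0 → ∀ X ∈ S.emod m,
      Function.Bijective fun u : HP ⟶ X⟦j⟧ => g ≫ u) ∧
    (∀ X ∈ S.emod m,
      Function.Injective fun u : HP ⟶ X⟦(1 : ℤ)⟧ => g ≫ u) := by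
  have hW₁ : S.t.le (-(m : ℤ) - 1) (W⟦(1 : ℤ)⟧) := S.t.le_shift _ 1 _ (by omega) W hW.1
  have injective : ∀ j : ℤ, j ≤ 1 → ∀ X ∈ S.emod m,
      Function.Injective fun u : HP ⟶ X⟦j⟧ => g ≫ u := fun j hj X hX =>
    precomp_mor₂_injective hTri
      (S.t.eq_zero_of_le_of_ge_shift hW₁ hX.2 (by omega))
  refine ⟨fun j hj X hX => ⟨injective j (by omega) X hX, ?_⟩, fun X hX => injective 1 le_rfl X hX⟩
  exact precomp_mor₂_surjective hTri (S.t.eq_zero_of_le_of_ge_shift hW.1 hX.2 (by omega))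

theorem stmt7 (S : ExtModSetting k D) (m : ℕ) (hm : 0 < m)
    (P : D) (hP : P ∈ S.projC (-(m : ℤ)) 0)
    (W HP : D) (w : W ⟶ P) (g : P ⟶ HP) (h : HP ⟶ W⟦(1 : ℤ)⟧)
    (hTri : Triangle.mk w g h ∈ distTriang D)
    (hW : S.t.le (-(m : ℤ)) W ∧ S.t.ge (-(m : ℤ)) W)
    (hHP : HP ∈ S.emod m) :
    (∀ j : ℤ, j ≤ 0 → ∀ X ∈ S.emod m,
      Function.Bijective fun u : HP ⟶ X⟦j⟧ => g ≫ u) ∧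
    (∀ X ∈ S.emod m,
      Function.Injective fun u : HP ⟶ X⟦(1 : ℤ)⟧ => g ≫ u) :=
  stmt7_general S m P W HP w g h hTri hW
end

section
/- Let P be an (m+1)-term presilting complex in K^b(proj A). Then: (a) H^{[-(m-1),0]}(P) belongs to T(P) and is a projective object of T(P); (b) H^{[-(m-1),0]}(νP[-1]) belongs to F(P) and is an injective object of F(P). -/
open CategoryTheory Limits Pretriangulated Triangulated

variable {k : Type*} [Field k]
variable {D : Type*} [Category D] [Preadditive D] [CategoryTheory.Linear k D]
  [HasZeroObject D] [HasShift D ℤ] [∀ n : ℤ, (shiftFunctor D n).Additive]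
  [Pretriangulated D] [HasFiniteBiproducts D]

/-!
Everything is read off the long exact `Hom`-sequences of the two truncation triangles.
For (a), `Hom(P, HP[j])` sits between `Hom(P, P[j]) = 0` (presilting) and
`Hom(P, W[j+1]) = 0`, since `W[j+1]` is concentrated in degree `-m-j-1` below the range of the
projective complex `P`; a map `HP → Y[1]` with `Y ∈ T(P)` vanishes on `P`, hence factors through
`W[1] ∈ D^{≤ -m-1}`, which has no maps to `Y[1] ∈ D^{≥ -m}`. Part (b) is dual, with Nakayama
duality `Hom(P, Y) ≅ D Hom(Y, νP)` turning presilting into `Hom(P, νP[n]) = 0` for `n < 0`, and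
`Y ∈ F(P)` into `Hom(Y, νP) = 0`.
-/

section TriangleHom

variable {C : Type*} [Category C] [Preadditive C] [HasZeroObject C] [HasShift C ℤ]
  [∀ n : ℤ, (shiftFunctor C n).Additive] [Pretriangulated C] {T : Triangle C}

lemma Triangle.hom_to_obj₂_eq_zero (hT : T ∈ distTriang C) {X : C}
    (h₁ : ∀ u : X ⟶ T.obj₁, u = 0) (h₃ : ∀ u : X ⟶ T.obj₃, u = 0) (f : X ⟶ T.obj₂) :
    f = 0 := by
  obtain ⟨u, rfl⟩ := Triangle.coyoneda_exact₂ T hT f (h₃ _)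
  rw [h₁ u, zero_comp]

lemma Triangle.hom_from_obj₂_eq_zero (hT : T ∈ distTriang C) {Y : C}
    (h₁ : ∀ u : T.obj₁ ⟶ Y, u = 0) (h₃ : ∀ u : T.obj₃ ⟶ Y, u = 0) (f : T.obj₂ ⟶ Y) :
    f = 0 := by
  obtain ⟨u, rfl⟩ := Triangle.yoneda_exact₂ T hT f (h₁ _)
  rw [h₃ u, comp_zero]

end TriangleHom

namespace ExtModSetting

variable (S : ExtModSetting k D)

lemma hom_nakF_eq_zero_of_hom_eq_zero {P Y : D} (hP : P ∈ S.Kb) (h : ∀ u : P ⟶ Y, u = 0)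
    (v : Y ⟶ S.nakF P) : v = 0 := by
  obtain ⟨e, -⟩ := S.nakDuality P hP
  have : Subsingleton (P ⟶ Y) := ⟨fun a b => (h a).trans (h b).symm⟩
  have : Subsingleton (Module.Dual k (Y ⟶ S.nakF P)) := (e Y).symm.toEquiv.subsingleton
  have : Subsingleton (Y ⟶ S.nakF P) := (Module.subsingleton_dual_iff k).1 this
  exact Subsingleton.elim v 0

lemma hom_shift_nakF_eq_zero {P : D} (hP : P ∈ S.Kb) (hpre : Presilting P) {n : ℤ} (hn : n < 0)
    (f : P ⟶ (S.nakF P)⟦n⟧) : f = 0 := by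
  rw [← (shiftFunctor D (-n)).map_eq_zero_iff,
    ← Preadditive.IsIso.comp_right_eq_zero _
      ((shiftFunctorCompIsoId D n (-n) (add_neg_cancel n)).app _).hom]
  exact S.hom_nakF_eq_zero_of_hom_eq_zero hP (hpre (-n) (by omega)) _

lemma projIn_TP {m : ℕ} {P W HP : D} (hP : P ∈ S.projC (-(m : ℤ)) 0) (hpre : Presilting P)
    {w : W ⟶ P} {g : P ⟶ HP} {h : HP ⟶ W⟦(1 : ℤ)⟧} (hT : Triangle.mk w g h ∈ distTriang D)
    (hW : S.t.le (-(m : ℤ)) W) (hHP : HP ∈ S.emod m) : ProjIn (S.TP m P) HP := by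
  refine ⟨⟨hHP, fun j hj f => ?_⟩, fun Y hY f => ?_⟩
  · have hWj : ∀ u : P ⟶ (W⟦j⟧)⟦(1 : ℤ)⟧, u = 0 := by
      refine S.projC_vanish _ 0 P _ hP (S.t.le_monotone (a := -(m : ℤ) - j - 1) (by omega) _ ?_)
      exact S.t.le_shift _ 1 _ (by omega) _ (S.t.le_shift _ j (-(m : ℤ) - j) (by omega) W hW)
    exact Triangle.hom_to_obj₂_eq_zero
      (rot_of_distTriang _ (Triangle.shift_distinguished _ hT j)) (hpre j (by omega)) hWj f
  · have hWY : ∀ u : W⟦(1 : ℤ)⟧ ⟶ Y⟦(1 : ℤ)⟧, u = 0 := fun u =>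
      S.t.zero_of_isLE_of_isGE u (-(m : ℤ) - 1) (-(m : ℤ)) (by omega)
        ⟨S.t.le_shift _ 1 _ (by omega) W hW⟩ ⟨S.t.ge_shift (1 - (m : ℤ)) 1 _ (by omega) Y hY.1.2⟩
    exact Triangle.hom_from_obj₂_eq_zero (rot_of_distTriang _ hT) (hY.2 1 le_rfl) hWY f

lemma injIn_FP {m : ℕ} {P HI W' : D} (hP : P ∈ S.Kb) (hP₀ : S.t.le 0 P) (hpre : Presilting P)
    {f : HI ⟶ (S.nakF P)⟦(-1 : ℤ)⟧} {g : (S.nakF P)⟦(-1 : ℤ)⟧ ⟶ W'} {h : W' ⟶ HI⟦(1 : ℤ)⟧}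
    (hT : Triangle.mk f g h ∈ distTriang D) (hW' : S.t.ge 1 W') (hHI : HI ∈ S.emod m) :
    InjIn (S.FP m P) HI := by
  refine ⟨⟨hHI, fun j hj u => ?_⟩, fun Y hY u => ?_⟩
  · have hW'j : ∀ v : P ⟶ (W'⟦j⟧)⟦(-1 : ℤ)⟧, v = 0 := fun v =>
      S.t.zero_of_isLE_of_isGE v 0 (2 - j) (by omega) ⟨hP₀⟩
        ⟨S.t.ge_shift (1 - j) (-1) _ (by omega) _ (S.t.ge_shift 1 j _ (by omega) W' hW')⟩
    have hνj : ∀ v : P ⟶ ((S.nakF P)⟦(-1 : ℤ)⟧)⟦j⟧, v = 0 := fun v =>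
      (Preadditive.IsIso.comp_right_eq_zero v
        ((shiftFunctorAdd' D (-1) j (-1 + j) rfl).app (S.nakF P)).inv).1
        (S.hom_shift_nakF_eq_zero hP hpre (by omega) _)
    exact Triangle.hom_to_obj₂_eq_zero
      (inv_rot_of_distTriang _ (Triangle.shift_distinguished _ hT j)) hW'j hνj u
  · have hPY : ∀ p : P ⟶ Y, p = 0 := fun p =>
      (Preadditive.IsIso.comp_right_eq_zero p ((shiftFunctorZero D ℤ).app Y).inv).1
        (hY.2 0 le_rfl _)
    have hYν : ∀ v : Y ⟶ ((S.nakF P)⟦(-1 : ℤ)⟧)⟦(1 : ℤ)⟧, v = 0 := fun v =>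
      (Preadditive.IsIso.comp_right_eq_zero v
        ((shiftFunctorCompIsoId D (-1 : ℤ) 1 (by omega)).app (S.nakF P)).hom).1
        (S.hom_nakF_eq_zero_of_hom_eq_zero hP hPY _)
    exact Triangle.hom_to_obj₂_eq_zero (rot_of_distTriang _ (rot_of_distTriang _ hT))
      (fun v => S.t.zero_of_isLE_of_isGE v 0 1 (by omega) ⟨hY.1.1⟩ ⟨hW'⟩) hYν u

end ExtModSetting

theorem stmt9_general (S : ExtModSetting k D) (m : ℕ)
    (P : D) (hP : P ∈ S.projC (-(m : ℤ)) 0) (hpre : ExtModSetting.Presilting P)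
    (W HP : D) (w : W ⟶ P) (g : P ⟶ HP) (h : HP ⟶ W⟦(1 : ℤ)⟧)
    (hTri : Triangle.mk w g h ∈ distTriang D)
    (hW : S.t.le (-(m : ℤ)) W ∧ S.t.ge (-(m : ℤ)) W)
    (hHP : HP ∈ S.emod m)
    (HI W' : D) (f' : HI ⟶ (S.nakF P)⟦(-1 : ℤ)⟧) (g' : (S.nakF P)⟦(-1 : ℤ)⟧ ⟶ W')
    (h' : W' ⟶ HI⟦(1 : ℤ)⟧)
    (hTri' : Triangle.mk f' g' h' ∈ distTriang D)
    (hW' : S.t.le 1 W' ∧ S.t.ge 1 W')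
    (hHI : HI ∈ S.emod m) :
    ProjIn (S.TP m P) HP ∧ InjIn (S.FP m P) HI :=
  ⟨S.projIn_TP hP hpre hTri hW.1 hHP,
    S.injIn_FP ⟨_, _, hP⟩ (S.projC_amp _ _ P hP).2 hpre hTri' hW'.2 hHI⟩

theorem stmt9 (S : ExtModSetting k D) (m : ℕ) (hm : 0 < m)
    (P : D) (hP : P ∈ S.projC (-(m : ℤ)) 0) (hpre : ExtModSetting.Presilting P)
    (W HP : D) (w : W ⟶ P) (g : P ⟶ HP) (h : HP ⟶ W⟦(1 : ℤ)⟧)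
    (hTri : Triangle.mk w g h ∈ distTriang D)
    (hW : S.t.le (-(m : ℤ)) W ∧ S.t.ge (-(m : ℤ)) W)
    (hHP : HP ∈ S.emod m)
    (HI W' : D) (f' : HI ⟶ (S.nakF P)⟦(-1 : ℤ)⟧) (g' : (S.nakF P)⟦(-1 : ℤ)⟧ ⟶ W')
    (h' : W' ⟶ HI⟦(1 : ℤ)⟧)
    (hTri' : Triangle.mk f' g' h' ∈ distTriang D)
    (hW' : S.t.le 1 W' ∧ S.t.ge 1 W')
    (hHI : HI ∈ S.emod m) :
    ProjIn (S.TP m P) HP ∧ InjIn (S.FP m P) HI :=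
  stmt9_general S m P hP hpre W HP w g h hTri hW hHP HI W' f' g' h' hTri' hW' hHI
end

section
/- Let P be an (m+1)-term silting complex in K^b(proj A), and for X∈m-mod A let t(X)→X→f(X)→t(X)[1] be the canonical triangle with respect to the s-torsion pair (T(P),F(P)). Then t(νA[m-1]) is an injective object of T(P), and f(A) is a projective object of F(P). -/
open CategoryTheory Limits Pretriangulated Triangulated

variable {k : Type*} [Field k]
variable {D : Type*} [Category D] [Preadditive D] [CategoryTheory.Linear k D]
  [HasZeroObject D] [HasShift D ℤ] [∀ n : ℤ, (shiftFunctor D n).Additive]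
  [Pretriangulated D] [HasFiniteBiproducts D]

/-!
The heart of the matter is that `T(P)` and `F(P)` are Hom-orthogonal.  Because `P` is silting,
every object of `K^b(proj A)` is a retract of one admitting, at every cut `c`, a weight
decomposition `L → W → H → L⟦1⟧` with `L` left orthogonal to `(P⟦< c⟧)^⊥`, and `H` in
`(P⟦< c⟧)^⊥` and left orthogonal to `(P⟦≥ c⟧)^⊥`: these objects contain `P` and are closed under
shifts and extensions.  Closure under extensions needs no octahedral axiom: the upper part of
the middle term is the cone of a morphism of triangles, and the four lemma, applied to the long
exact Hom-sequences, shows that this cone inherits the orthogonality properties of the two given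
upper parts.  For `Y ∈ T(P)` and `Z ∈ F(P)`, the
projective presentation `p_m(Y)` lies in `(P⟦< 0⟧)^⊥` and `Z` in `(P⟦≥ 0⟧)^⊥`, so the weight
decomposition at `c = 0` kills the composite `p_m(Y) → Y → Z`; what is left of `Y → Z` vanishes
for degree reasons.

Given the orthogonality, a map `Y → t(νA⟦m-1⟧)⟦1⟧` from `Y ∈ T(P)` factors through
`f(νA⟦m-1⟧)` because `Hom(Y, νA⟦m⟧) = 0` on `m-mod A`, hence vanishes; dually for `f(A)`,
using `Hom(A, Z⟦1⟧) = 0`.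
-/

section Shift

variable {C : Type*} [Category C] [Preadditive C] [HasShift C ℤ]

def RightOrth (P : C) (j : ℤ) (V : C) : Prop := ∀ p : P⟦j⟧ ⟶ V, p = 0

lemma hom_eq_zero_of_rightOrth_zero {P V : C} (h : RightOrth P 0 V) (f : P ⟶ V) : f = 0 := by
  rw [← ((shiftFunctorZero C ℤ).app P).inv_hom_id_assoc f, h (_ ≫ f), comp_zero]

variable [∀ n : ℤ, (shiftFunctor C n).Additive]

lemma shift_hom_eq_zero {A B : C} {u v : ℤ} (huv : u + v = 0)
    (h : ∀ g : A ⟶ B⟦v⟧, g = 0) (f : A⟦u⟧ ⟶ B) : f = 0 :=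
  letI : (shiftEquiv' C u v huv).functor.Additive := inferInstanceAs (shiftFunctor C u).Additive
  ((shiftEquiv' C u v huv).toAdjunction.homAddEquiv A B).map_eq_zero_iff.1 (h _)

lemma hom_shift_eq_zero {A B : C} {u v : ℤ} (huv : u + v = 0)
    (h : ∀ g : A⟦u⟧ ⟶ B, g = 0) (f : A ⟶ B⟦v⟧) : f = 0 :=
  letI : (shiftEquiv' C u v huv).functor.Additive := inferInstanceAs (shiftFunctor C u).Additive
  ((shiftEquiv' C u v huv).toAdjunction.homAddEquiv A B).symm.map_eq_zero_iff.1 (h _)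

lemma RightOrth.shift {P X : C} {j : ℤ} (h : RightOrth P j X) (s j' : ℤ) (hj : j + s = j') :
    RightOrth P j' (X⟦s⟧) :=
  hom_shift_eq_zero (neg_add_cancel s) fun g => by
    let e : P⟦j'⟧⟦-s⟧ ≅ P⟦j⟧ := ((shiftFunctorAdd' C j' (-s) j (by omega)).app P).symm
    rw [← e.hom_inv_id_assoc g, h (e.inv ≫ g), comp_zero]

lemma rightOrth_self_of_presilting {P : C} (hP : ExtModSetting.Presilting P) {j : ℤ}
    (hj : j < 0) : RightOrth P j P :=
  shift_hom_eq_zero (add_neg_cancel j) (hP (-j) (by omega))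

variable (P : C)

def lowerPart (c : ℤ) : Set C :=
  {L | ∀ V, (∀ j < c, RightOrth P j V) → ∀ f : L ⟶ V, f = 0}

def upperPart (c : ℤ) : Set C :=
  {H | (∀ j < c, RightOrth P j H) ∧ ∀ V, (∀ j ≥ c, RightOrth P j V) → ∀ f : H ⟶ V, f = 0}

variable {P}

lemma lowerPart_shift {c : ℤ} {L : C} (hL : L ∈ lowerPart P c) (s : ℤ) :
    L⟦s⟧ ∈ lowerPart P (c + s) := fun V hV =>
  shift_hom_eq_zero (add_neg_cancel s)
    (hL _ fun j hj => (hV (j + s) (by omega)).shift (-s) j (by ring))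

lemma upperPart_shift {c : ℤ} {H : C} (hH : H ∈ upperPart P c) (s : ℤ) :
    H⟦s⟧ ∈ upperPart P (c + s) :=
  ⟨fun j hj => (hH.1 (j - s) (by omega)).shift s j (by ring), fun V hV =>
    shift_hom_eq_zero (add_neg_cancel s)
      (hH.2 _ fun j hj => (hV (j + s) (by omega)).shift (-s) j (by ring))⟩

end Shift

section Pretriangulated

variable {C : Type*} [Category C] [Preadditive C] [HasZeroObject C] [HasShift C ℤ]
  [∀ n : ℤ, (shiftFunctor C n).Additive] [Pretriangulated C]

section Exactness

variable {X₁ X₂ X₃ : C} {f : X₁ ⟶ X₂} {g : X₂ ⟶ X₃} {h : X₃ ⟶ X₁⟦(1 : ℤ)⟧}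

lemma yoneda_exact₁_of_distTriang (hT : Triangle.mk f g h ∈ distTriang C) {Y : C}
    (a : X₁⟦(1 : ℤ)⟧ ⟶ Y) (ha : h ≫ a = 0) : ∃ b : X₂⟦(1 : ℤ)⟧ ⟶ Y, a = f⟦1⟧' ≫ b := by
  obtain ⟨b, hb⟩ : ∃ b : X₂⟦(1 : ℤ)⟧ ⟶ Y, a = (-f⟦1⟧') ≫ b :=
    Triangle.yoneda_exact₂ _ (rot_of_distTriang _ (rot_of_distTriang _ hT)) a ha
  exact ⟨-b, by rw [hb, Preadditive.neg_comp, Preadditive.comp_neg]⟩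

lemma coyoneda_exact₂_shift_of_distTriang (hT : Triangle.mk f g h ∈ distTriang C) {Y : C}
    (a : Y ⟶ X₂⟦(1 : ℤ)⟧) (ha : a ≫ g⟦1⟧' = 0) : ∃ b : Y ⟶ X₁⟦(1 : ℤ)⟧, a = b ≫ f⟦1⟧' := by
  have ha' : a ≫ (-g⟦1⟧') = 0 := by rw [Preadditive.comp_neg, ha, neg_zero]
  obtain ⟨b, hb⟩ : ∃ b : Y ⟶ X₁⟦(1 : ℤ)⟧, a = b ≫ (-f⟦1⟧') := Triangle.coyoneda_exact₂ _
    (rot_of_distTriang _ (rot_of_distTriang _ (rot_of_distTriang _ hT))) a ha'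
  exact ⟨-b, by rw [hb, Preadditive.neg_comp, Preadditive.comp_neg]⟩

lemma yoneda_exact₂_shift_of_distTriang (hT : Triangle.mk f g h ∈ distTriang C) {Y : C}
    (a : X₂⟦(1 : ℤ)⟧ ⟶ Y) (ha : f⟦1⟧' ≫ a = 0) : ∃ b : X₃⟦(1 : ℤ)⟧ ⟶ Y, a = g⟦1⟧' ≫ b := by
  have ha' : (-f⟦1⟧') ≫ a = 0 := by rw [Preadditive.neg_comp, ha, neg_zero]
  obtain ⟨b, hb⟩ : ∃ b : X₃⟦(1 : ℤ)⟧ ⟶ Y, a = (-g⟦1⟧') ≫ b := Triangle.yoneda_exact₂ _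
    (rot_of_distTriang _ (rot_of_distTriang _ (rot_of_distTriang _ hT))) a ha'
  exact ⟨-b, by rw [hb, Preadditive.neg_comp, Preadditive.comp_neg]⟩

end Exactness

section Cone

variable {L W H : C} {x : L ⟶ W} {y : W ⟶ H} {z : H ⟶ L⟦(1 : ℤ)⟧}

lemma hom_to_cone_eq_zero_iff (hC : Triangle.mk x y z ∈ distTriang C) (T : C) :
    (∀ f : T ⟶ H, f = 0) ↔
      (∀ g : T ⟶ W, ∃ a, g = a ≫ x) ∧ ∀ a : T ⟶ L⟦(1 : ℤ)⟧, a ≫ x⟦1⟧' = 0 → a = 0 := by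
  constructor
  · intro h
    refine ⟨fun g => Triangle.coyoneda_exact₂ _ hC g (h _), fun a ha => ?_⟩
    obtain ⟨b, rfl⟩ : ∃ b : T ⟶ H, a = b ≫ z := Triangle.coyoneda_exact₁ _ hC a ha
    rw [h b, zero_comp]
  · rintro ⟨hsurj, hinj⟩ p
    have hzx : z ≫ x⟦1⟧' = 0 := comp_distTriang_mor_zero₃₁ _ hC
    have hxy : x ≫ y = 0 := comp_distTriang_mor_zero₁₂ _ hC
    have hpz : p ≫ z = 0 := hinj _ (by rw [Category.assoc, hzx, comp_zero])
    obtain ⟨g, rfl⟩ : ∃ g : T ⟶ W, p = g ≫ y := Triangle.coyoneda_exact₃ _ hC p hpz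
    obtain ⟨a, rfl⟩ := hsurj g
    rw [Category.assoc, hxy, comp_zero]

lemma hom_from_cone_eq_zero_iff (hC : Triangle.mk x y z ∈ distTriang C) (V : C) :
    (∀ f : H ⟶ V, f = 0) ↔
      (∀ g : W ⟶ V, x ≫ g = 0 → g = 0) ∧ ∀ b : L⟦(1 : ℤ)⟧ ⟶ V, ∃ c, b = x⟦1⟧' ≫ c := by
  constructor
  · intro h
    refine ⟨fun g hg => ?_, fun b => yoneda_exact₁_of_distTriang hC b (h _)⟩
    obtain ⟨e, rfl⟩ : ∃ e : H ⟶ V, g = y ≫ e := Triangle.yoneda_exact₂ _ hC g hg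
    rw [h e, comp_zero]
  · rintro ⟨hinj, hsurj⟩ ξ
    have hzx : z ≫ x⟦1⟧' = 0 := comp_distTriang_mor_zero₃₁ _ hC
    have hxy : x ≫ y = 0 := comp_distTriang_mor_zero₁₂ _ hC
    have hyξ : y ≫ ξ = 0 := hinj _ (by rw [← Category.assoc, hxy, zero_comp])
    obtain ⟨b, rfl⟩ : ∃ b : L⟦(1 : ℤ)⟧ ⟶ V, ξ = z ≫ b := Triangle.yoneda_exact₃ _ hC ξ hyξ
    obtain ⟨c, rfl⟩ := hsurj b
    rw [← Category.assoc, hzx, zero_comp]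

end Cone

section FourLemma

variable {L₁ L₂ L₃ W₁ W₂ W₃ : C} {l : L₁ ⟶ L₂} {l' : L₂ ⟶ L₃} {δ : L₃ ⟶ L₁⟦(1 : ℤ)⟧}
  {u : W₁ ⟶ W₂} {v : W₂ ⟶ W₃} {w : W₃ ⟶ W₁⟦(1 : ℤ)⟧}
  {x₁ : L₁ ⟶ W₁} {x₂ : L₂ ⟶ W₂} {x₃ : L₃ ⟶ W₃}

lemma exists_eq_comp_of_four_lemma (hL : Triangle.mk l l' δ ∈ distTriang C)
    (hW : Triangle.mk u v w ∈ distTriang C) (h₁ : l ≫ x₂ = x₁ ≫ u) (h₂ : l' ≫ x₃ = x₂ ≫ v)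
    (h₃ : δ ≫ x₁⟦1⟧' = x₃ ≫ w) {T : C}
    (s₁ : ∀ g : T ⟶ W₁, ∃ a, g = a ≫ x₁) (s₃ : ∀ g : T ⟶ W₃, ∃ a, g = a ≫ x₃)
    (i₁ : ∀ a : T ⟶ L₁⟦(1 : ℤ)⟧, a ≫ x₁⟦1⟧' = 0 → a = 0) (g : T ⟶ W₂) :
    ∃ a, g = a ≫ x₂ := by
  obtain ⟨a₃, ha₃⟩ := s₃ (g ≫ v)
  have ha₃δ : a₃ ≫ δ = 0 := i₁ _ (by
    rw [Category.assoc, h₃, ← Category.assoc, ← ha₃, Category.assoc,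
      show v ≫ w = 0 from comp_distTriang_mor_zero₂₃ _ hW, comp_zero])
  obtain ⟨a₂, rfl⟩ : ∃ a₂ : T ⟶ L₂, a₃ = a₂ ≫ l' := Triangle.coyoneda_exact₃ _ hL a₃ ha₃δ
  have hv : (g - a₂ ≫ x₂) ≫ v = 0 := by
    rw [Preadditive.sub_comp, ha₃, Category.assoc, Category.assoc, h₂, sub_self]
  obtain ⟨b, hb⟩ : ∃ b : T ⟶ W₁, g - a₂ ≫ x₂ = b ≫ u := Triangle.coyoneda_exact₂ _ hW _ hv
  obtain ⟨a₁, rfl⟩ := s₁ b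
  refine ⟨a₂ + a₁ ≫ l, ?_⟩
  rw [Preadditive.add_comp, Category.assoc, h₁, ← Category.assoc, ← hb, add_sub_cancel]

lemma eq_zero_of_four_lemma (hL : Triangle.mk l l' δ ∈ distTriang C)
    (hW : Triangle.mk u v w ∈ distTriang C) (h₁ : l ≫ x₂ = x₁ ≫ u) (h₂ : l' ≫ x₃ = x₂ ≫ v)
    (h₃ : δ ≫ x₁⟦1⟧' = x₃ ≫ w) {T : C} (s₃ : ∀ g : T ⟶ W₃, ∃ a, g = a ≫ x₃)
    (i₁ : ∀ a : T ⟶ L₁⟦(1 : ℤ)⟧, a ≫ x₁⟦1⟧' = 0 → a = 0)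
    (i₃ : ∀ a : T ⟶ L₃⟦(1 : ℤ)⟧, a ≫ x₃⟦1⟧' = 0 → a = 0)
    (a : T ⟶ L₂⟦(1 : ℤ)⟧) (ha : a ≫ x₂⟦1⟧' = 0) : a = 0 := by
  have hal' : a ≫ l'⟦1⟧' = 0 := i₃ _ (by
    rw [Category.assoc, ← Functor.map_comp, h₂, Functor.map_comp, ← Category.assoc, ha,
      zero_comp])
  obtain ⟨b, rfl⟩ := coyoneda_exact₂_shift_of_distTriang hL a hal'
  have hbu : (b ≫ x₁⟦1⟧') ≫ u⟦1⟧' = 0 := by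
    rw [Category.assoc, ← Functor.map_comp, ← h₁, Functor.map_comp, ← Category.assoc, ha]
  obtain ⟨c, hc⟩ : ∃ c : T ⟶ W₃, b ≫ x₁⟦1⟧' = c ≫ w := Triangle.coyoneda_exact₁ _ hW _ hbu
  obtain ⟨d, rfl⟩ := s₃ c
  have hb : b = d ≫ δ := sub_eq_zero.1 (i₁ _ (by
    rw [Preadditive.sub_comp, hc, Category.assoc, Category.assoc, h₃, sub_self]))
  rw [hb, Category.assoc, show δ ≫ l⟦1⟧' = 0 from comp_distTriang_mor_zero₃₁ _ hL, comp_zero]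

lemma eq_zero_of_four_lemma_dual (hL : Triangle.mk l l' δ ∈ distTriang C)
    (hW : Triangle.mk u v w ∈ distTriang C) (h₁ : l ≫ x₂ = x₁ ≫ u) (h₂ : l' ≫ x₃ = x₂ ≫ v)
    (h₃ : δ ≫ x₁⟦1⟧' = x₃ ≫ w) {V : C}
    (i₁ : ∀ g : W₁ ⟶ V, x₁ ≫ g = 0 → g = 0) (i₃ : ∀ g : W₃ ⟶ V, x₃ ≫ g = 0 → g = 0)
    (s₁ : ∀ b : L₁⟦(1 : ℤ)⟧ ⟶ V, ∃ c, b = x₁⟦1⟧' ≫ c) (g : W₂ ⟶ V) (hg : x₂ ≫ g = 0) :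
    g = 0 := by
  have hug : u ≫ g = 0 := i₁ _ (by rw [← Category.assoc, ← h₁, Category.assoc, hg, comp_zero])
  obtain ⟨g₃, rfl⟩ : ∃ g₃ : W₃ ⟶ V, g = v ≫ g₃ := Triangle.yoneda_exact₂ _ hW g hug
  have hl' : l' ≫ x₃ ≫ g₃ = 0 := by rw [← Category.assoc, h₂, Category.assoc, hg]
  obtain ⟨b, hb⟩ : ∃ b : L₁⟦(1 : ℤ)⟧ ⟶ V, x₃ ≫ g₃ = δ ≫ b :=
    Triangle.yoneda_exact₃ _ hL _ hl'
  obtain ⟨c, rfl⟩ := s₁ b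
  have hg₃ : g₃ = w ≫ c := sub_eq_zero.1 (i₃ _ (by
    rw [Preadditive.comp_sub, hb, ← Category.assoc, ← Category.assoc, h₃, sub_self]))
  rw [hg₃, ← Category.assoc, show v ≫ w = 0 from comp_distTriang_mor_zero₂₃ _ hW, zero_comp]

lemma exists_eq_comp_of_four_lemma_dual (hL : Triangle.mk l l' δ ∈ distTriang C)
    (hW : Triangle.mk u v w ∈ distTriang C) (h₁ : l ≫ x₂ = x₁ ≫ u) (h₂ : l' ≫ x₃ = x₂ ≫ v)
    (h₃ : δ ≫ x₁⟦1⟧' = x₃ ≫ w) {V : C} (i₃ : ∀ g : W₃ ⟶ V, x₃ ≫ g = 0 → g = 0)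
    (s₁ : ∀ b : L₁⟦(1 : ℤ)⟧ ⟶ V, ∃ c, b = x₁⟦1⟧' ≫ c)
    (s₃ : ∀ b : L₃⟦(1 : ℤ)⟧ ⟶ V, ∃ c, b = x₃⟦1⟧' ≫ c) (b : L₂⟦(1 : ℤ)⟧ ⟶ V) :
    ∃ c, b = x₂⟦1⟧' ≫ c := by
  obtain ⟨c₁, hc₁⟩ := s₁ (l⟦1⟧' ≫ b)
  have hwc₁ : w ≫ c₁ = 0 := i₃ _ (by
    rw [← Category.assoc, ← h₃, Category.assoc, ← hc₁, ← Category.assoc,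
      show δ ≫ l⟦1⟧' = 0 from comp_distTriang_mor_zero₃₁ _ hL, zero_comp])
  obtain ⟨c₂, rfl⟩ := yoneda_exact₁_of_distTriang hW c₁ hwc₁
  have hl : l⟦1⟧' ≫ (b - x₂⟦1⟧' ≫ c₂) = 0 := by
    rw [Preadditive.comp_sub, hc₁, ← Category.assoc, ← Category.assoc, ← Functor.map_comp,
      ← Functor.map_comp, h₁, sub_self]
  obtain ⟨e, he⟩ := yoneda_exact₂_shift_of_distTriang hL _ hl
  obtain ⟨c₃, rfl⟩ := s₃ e
  refine ⟨c₂ + v⟦1⟧' ≫ c₃, ?_⟩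
  rw [← Category.assoc, ← Functor.map_comp, h₂, Functor.map_comp, Category.assoc] at he
  rw [Preadditive.comp_add, ← he, add_sub_cancel]

end FourLemma

section ConeOfMorphism

variable {L₁ L₂ L₃ W₁ W₂ W₃ H₁ H₂ H₃ : C} {l : L₁ ⟶ L₂} {l' : L₂ ⟶ L₃}
  {δ : L₃ ⟶ L₁⟦(1 : ℤ)⟧} {u : W₁ ⟶ W₂} {v : W₂ ⟶ W₃} {w : W₃ ⟶ W₁⟦(1 : ℤ)⟧}
  {x₁ : L₁ ⟶ W₁} {x₂ : L₂ ⟶ W₂} {x₃ : L₃ ⟶ W₃} {y₁ : W₁ ⟶ H₁} {y₂ : W₂ ⟶ H₂} {y₃ : W₃ ⟶ H₃}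
  {z₁ : H₁ ⟶ L₁⟦(1 : ℤ)⟧} {z₂ : H₂ ⟶ L₂⟦(1 : ℤ)⟧} {z₃ : H₃ ⟶ L₃⟦(1 : ℤ)⟧}

lemma hom_to_cone_eq_zero (hL : Triangle.mk l l' δ ∈ distTriang C)
    (hW : Triangle.mk u v w ∈ distTriang C) (h₁ : l ≫ x₂ = x₁ ≫ u) (h₂ : l' ≫ x₃ = x₂ ≫ v)
    (h₃ : δ ≫ x₁⟦1⟧' = x₃ ≫ w) (hC₁ : Triangle.mk x₁ y₁ z₁ ∈ distTriang C)
    (hC₂ : Triangle.mk x₂ y₂ z₂ ∈ distTriang C) (hC₃ : Triangle.mk x₃ y₃ z₃ ∈ distTriang C)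
    {T : C} (hT₁ : ∀ f : T ⟶ H₁, f = 0) (hT₃ : ∀ f : T ⟶ H₃, f = 0) (f : T ⟶ H₂) : f = 0 := by
  obtain ⟨s₁, i₁⟩ := (hom_to_cone_eq_zero_iff hC₁ T).1 hT₁
  obtain ⟨s₃, i₃⟩ := (hom_to_cone_eq_zero_iff hC₃ T).1 hT₃
  exact (hom_to_cone_eq_zero_iff hC₂ T).2 ⟨exists_eq_comp_of_four_lemma hL hW h₁ h₂ h₃ s₁ s₃ i₁,
    eq_zero_of_four_lemma hL hW h₁ h₂ h₃ s₃ i₁ i₃⟩ f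

lemma hom_from_cone_eq_zero (hL : Triangle.mk l l' δ ∈ distTriang C)
    (hW : Triangle.mk u v w ∈ distTriang C) (h₁ : l ≫ x₂ = x₁ ≫ u) (h₂ : l' ≫ x₃ = x₂ ≫ v)
    (h₃ : δ ≫ x₁⟦1⟧' = x₃ ≫ w) (hC₁ : Triangle.mk x₁ y₁ z₁ ∈ distTriang C)
    (hC₂ : Triangle.mk x₂ y₂ z₂ ∈ distTriang C) (hC₃ : Triangle.mk x₃ y₃ z₃ ∈ distTriang C)
    {V : C} (hV₁ : ∀ f : H₁ ⟶ V, f = 0) (hV₃ : ∀ f : H₃ ⟶ V, f = 0) (f : H₂ ⟶ V) : f = 0 := by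
  obtain ⟨i₁, s₁⟩ := (hom_from_cone_eq_zero_iff hC₁ V).1 hV₁
  obtain ⟨i₃, s₃⟩ := (hom_from_cone_eq_zero_iff hC₃ V).1 hV₃
  exact (hom_from_cone_eq_zero_iff hC₂ V).2 ⟨eq_zero_of_four_lemma_dual hL hW h₁ h₂ h₃ i₁ i₃ s₁,
    exists_eq_comp_of_four_lemma_dual hL hW h₁ h₂ h₃ i₃ s₁ s₃⟩ f

end ConeOfMorphism

lemma sub_id_comp_sub_id_eq_zero {X Y Z : C} {f : X ⟶ Y} {g : Y ⟶ Z} {h : Z ⟶ X⟦(1 : ℤ)⟧}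
    (hT : Triangle.mk f g h ∈ distTriang C) {e : Y ⟶ Y} (hfe : f ≫ e = f) (heg : e ≫ g = g) :
    (e - 𝟙 Y) ≫ (e - 𝟙 Y) = 0 := by
  have hg : (e - 𝟙 Y) ≫ g = 0 := by rw [Preadditive.sub_comp, heg, Category.id_comp, sub_self]
  obtain ⟨s, hs⟩ : ∃ s : Y ⟶ X, e - 𝟙 Y = s ≫ f := Triangle.coyoneda_exact₂ _ hT _ hg
  have hf : f ≫ (e - 𝟙 Y) = 0 := by rw [Preadditive.comp_sub, hfe, Category.comp_id, sub_self]
  calc (e - 𝟙 Y) ≫ (e - 𝟙 Y) = s ≫ f ≫ (e - 𝟙 Y) := by rw [← Category.assoc, ← hs]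
    _ = 0 := by rw [hf, comp_zero]

lemma exists_retract_of_distTriang {X Y Z W₁ W₃ : C} {f : X ⟶ Y} {g : Y ⟶ Z}
    {h : Z ⟶ X⟦(1 : ℤ)⟧} (hT : Triangle.mk f g h ∈ distTriang C) {i₁ : X ⟶ W₁} {r₁ : W₁ ⟶ X}
    (hr₁ : i₁ ≫ r₁ = 𝟙 X) {i₃ : Z ⟶ W₃} {r₃ : W₃ ⟶ Z} (hr₃ : i₃ ≫ r₃ = 𝟙 Z) :
    ∃ (W₂ : C) (u : W₁ ⟶ W₂) (v : W₂ ⟶ W₃) (w : W₃ ⟶ W₁⟦(1 : ℤ)⟧) (i₂ : Y ⟶ W₂)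
      (r₂ : W₂ ⟶ Y), Triangle.mk u v w ∈ distTriang C ∧ i₂ ≫ r₂ = 𝟙 Y := by
  obtain ⟨W₂, u, v, hW⟩ := distinguished_cocone_triangle₂ (r₃ ≫ h ≫ i₁⟦1⟧')
  have hi : h ≫ i₁⟦1⟧' = i₃ ≫ r₃ ≫ h ≫ i₁⟦1⟧' := by rw [reassoc_of% hr₃]
  obtain ⟨i₂, hi₁, hi₂⟩ : ∃ i₂ : Y ⟶ W₂, f ≫ i₂ = i₁ ≫ u ∧ g ≫ i₃ = i₂ ≫ v :=
    complete_distinguished_triangle_morphism₂ _ _ hT hW i₁ i₃ hi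
  have hr : (r₃ ≫ h ≫ i₁⟦1⟧') ≫ r₁⟦1⟧' = r₃ ≫ h := by
    rw [Category.assoc, Category.assoc, ← Functor.map_comp, hr₁, CategoryTheory.Functor.map_id,
      Category.comp_id]
  obtain ⟨q, hq₁, hq₂⟩ : ∃ q : W₂ ⟶ Y, u ≫ q = r₁ ≫ f ∧ v ≫ r₃ = q ≫ g :=
    complete_distinguished_triangle_morphism₂ _ _ hW hT r₁ r₃ hr
  -- `e := i₂ ≫ q` fixes `f` and `g`, so `e - 𝟙` squares to zero and `e` is invertible
  set e := i₂ ≫ q with he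
  have hn := sub_id_comp_sub_id_eq_zero hT (e := e)
    (by rw [he, reassoc_of% hi₁, hq₁, reassoc_of% hr₁])
    (by rw [he, Category.assoc, ← hq₂, ← Category.assoc, ← hi₂, Category.assoc, hr₃,
      Category.comp_id])
  refine ⟨W₂, u, v, _, i₂, q ≫ (𝟙 Y - (e - 𝟙 Y)), hW, ?_⟩
  rw [← Category.assoc, ← he]
  simp only [Preadditive.comp_sub, Preadditive.sub_comp, Category.comp_id,
    Category.id_comp] at hn ⊢
  rw [← sub_eq_zero, ← neg_eq_zero, ← hn]
  abel

lemma injIn_of_distTriang {𝒯 ℱ : Set C} (h𝒯ℱ : ∀ Y ∈ 𝒯, ∀ Z ∈ ℱ, ∀ f : Y ⟶ Z, f = 0)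
    {X E F : C} {a : X ⟶ E} {b : E ⟶ F} {c : F ⟶ X⟦(1 : ℤ)⟧}
    (hT : Triangle.mk a b c ∈ distTriang C) (hX : X ∈ 𝒯) (hF : F ∈ ℱ)
    (hE : ∀ Y ∈ 𝒯, ∀ f : Y ⟶ E⟦(1 : ℤ)⟧, f = 0) : InjIn 𝒯 X := by
  refine ⟨hX, fun Y hY f => ?_⟩
  have hfa : f ≫ (-a⟦1⟧') = 0 := by rw [Preadditive.comp_neg, hE Y hY (f ≫ _), neg_zero]
  obtain ⟨g, rfl⟩ : ∃ g : Y ⟶ F, f = g ≫ c :=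
    Triangle.coyoneda_exact₃ _ (rot_of_distTriang _ hT) f hfa
  rw [h𝒯ℱ Y hY F hF g, zero_comp]

lemma projIn_of_distTriang {𝒯 ℱ : Set C} (h𝒯ℱ : ∀ Y ∈ 𝒯, ∀ Z ∈ ℱ, ∀ f : Y ⟶ Z, f = 0)
    {X E F : C} {a : X ⟶ E} {b : E ⟶ F} {c : F ⟶ X⟦(1 : ℤ)⟧}
    (hT : Triangle.mk a b c ∈ distTriang C) (hX : X ∈ 𝒯) (hF : F ∈ ℱ)
    (hE : ∀ Z ∈ ℱ, ∀ f : E ⟶ Z⟦(1 : ℤ)⟧, f = 0) : ProjIn ℱ F := by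
  refine ⟨hF, fun Z hZ f => ?_⟩
  obtain ⟨g, rfl⟩ : ∃ g : X⟦(1 : ℤ)⟧ ⟶ Z⟦(1 : ℤ)⟧, f = c ≫ g :=
    Triangle.yoneda_exact₃ _ hT f (hE Z hZ _)
  obtain ⟨g, rfl⟩ := (shiftFunctor C (1 : ℤ)).map_surjective g
  rw [h𝒯ℱ X hX Z hZ g, Functor.map_zero, comp_zero]

end Pretriangulated

section WeightDecomposition

open ZeroObject

variable {C : Type*} [Category C] [Preadditive C] [HasZeroObject C] [HasShift C ℤ]
  [∀ n : ℤ, (shiftFunctor C n).Additive] [Pretriangulated C]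

variable (P : C)

def HasWeightDecomposition (W : C) : Prop := ∀ c : ℤ, W ∈ star (lowerPart P c) (upperPart P c)

def IsRetractOfWeightDecomposable (X : C) : Prop :=
  ∃ (W : C) (i : X ⟶ W) (r : W ⟶ X), i ≫ r = 𝟙 X ∧ HasWeightDecomposition P W

variable {P}

lemma HasWeightDecomposition.shift {W : C} (hW : HasWeightDecomposition P W) (n : ℤ) :
    HasWeightDecomposition P (W⟦n⟧) := fun c => by
  obtain ⟨L, H, f, g, h, hT, hL, hH⟩ := hW (c - n)
  refine ⟨L⟦n⟧, H⟦n⟧, _, _, _, Triangle.shift_distinguished _ hT n, ?_, ?_⟩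
  · simpa using lowerPart_shift hL n
  · simpa using upperPart_shift hH n

lemma lowerPart_ext {L₁ L₂ L₃ : C} {l : L₁ ⟶ L₂} {l' : L₂ ⟶ L₃} {δ : L₃ ⟶ L₁⟦(1 : ℤ)⟧}
    (hL : Triangle.mk l l' δ ∈ distTriang C) {c : ℤ} (h₁ : L₁ ∈ lowerPart P c)
    (h₃ : L₃ ∈ lowerPart P c) : L₂ ∈ lowerPart P c := fun V hV φ => by
  obtain ⟨ψ, rfl⟩ : ∃ ψ : L₃ ⟶ V, φ = l' ≫ ψ := Triangle.yoneda_exact₂ _ hL φ (h₁ V hV _)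
  rw [h₃ V hV ψ, comp_zero]

lemma HasWeightDecomposition.ext {W₁ W₂ W₃ : C} {u : W₁ ⟶ W₂} {v : W₂ ⟶ W₃}
    {w : W₃ ⟶ W₁⟦(1 : ℤ)⟧} (hW : Triangle.mk u v w ∈ distTriang C)
    (h₁ : HasWeightDecomposition P W₁) (h₃ : HasWeightDecomposition P W₃) :
    HasWeightDecomposition P W₂ := fun c => by
  obtain ⟨L₁, H₁, x₁, y₁, z₁, hC₁, hL₁, hH₁⟩ := h₁ c
  obtain ⟨L₃, H₃, x₃, y₃, z₃, hC₃, hL₃, hH₃⟩ := h₃ c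
  have hH₁' : ∀ j < c, RightOrth P j (H₁⟦(1 : ℤ)⟧) := fun j hj =>
    (hH₁.1 (j - 1) (by omega)).shift 1 j (by ring)
  -- `x₃ ≫ w` lifts along `x₁⟦1⟧` since `L₃` admits no nonzero map to `H₁⟦1⟧`
  obtain ⟨δ, hδ⟩ : ∃ δ : L₃ ⟶ L₁⟦(1 : ℤ)⟧, x₃ ≫ w = δ ≫ x₁⟦1⟧' :=
    coyoneda_exact₂_shift_of_distTriang hC₁ _ (hL₃ _ hH₁' _)
  obtain ⟨L₂, l, l', hL⟩ := distinguished_cocone_triangle₂ δ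
  obtain ⟨x₂, h₁₂, h₂₃⟩ : ∃ x₂ : L₂ ⟶ W₂, l ≫ x₂ = x₁ ≫ u ∧ l' ≫ x₃ = x₂ ≫ v :=
    complete_distinguished_triangle_morphism₂ _ _ hL hW x₁ x₃ hδ.symm
  obtain ⟨H₂, y₂, z₂, hC₂⟩ := distinguished_cocone_triangle x₂
  exact ⟨L₂, H₂, x₂, y₂, z₂, hC₂, lowerPart_ext hL hL₁ hL₃,
    fun j hj => hom_to_cone_eq_zero hL hW h₁₂ h₂₃ hδ.symm hC₁ hC₂ hC₃ (hH₁.1 j hj) (hH₃.1 j hj),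
    fun V hV => hom_from_cone_eq_zero hL hW h₁₂ h₂₃ hδ.symm hC₁ hC₂ hC₃ (hH₁.2 V hV) (hH₃.2 V hV)⟩

lemma hasWeightDecomposition_self (hP : ExtModSetting.Presilting P) :
    HasWeightDecomposition P P := by
  intro c
  by_cases hc : c ≤ 0
  · refine ⟨0, P, 0, 𝟙 P, 0, contractible_distinguished₁ P,
      fun _ _ f => (isZero_zero C).eq_of_src f 0, fun j hj => ?_, fun V hV => ?_⟩
    · exact rightOrth_self_of_presilting hP (by omega)
    · exact hom_eq_zero_of_rightOrth_zero (hV 0 hc)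
  · exact ⟨P, 0, 𝟙 P, 0, 0, contractible_distinguished P,
      fun V hV => hom_eq_zero_of_rightOrth_zero (hV 0 (by omega)),
      fun j _ p => (isZero_zero C).eq_of_tgt p 0, fun _ _ f => (isZero_zero C).eq_of_src f 0⟩

lemma isThickSub_isRetractOfWeightDecomposable :
    ExtModSetting.IsThickSub {X : C | IsRetractOfWeightDecomposable P X} := by
  refine ⟨?_, ?_, ?_, ?_⟩
  · rintro X Y ⟨W, i, r, hir, hW⟩ e
    exact ⟨W, e.inv ≫ i, r ≫ e.hom, by simp [reassoc_of% hir], hW⟩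
  · rintro X n ⟨W, i, r, hir, hW⟩
    refine ⟨W⟦n⟧, i⟦n⟧', r⟦n⟧', ?_, hW.shift n⟩
    rw [← Functor.map_comp, hir, CategoryTheory.Functor.map_id]
  · rintro X Y Z f g h hT ⟨W₁, i₁, r₁, hr₁, hW₁⟩ ⟨W₃, i₃, r₃, hr₃, hW₃⟩
    obtain ⟨W₂, u, v, w, i₂, r₂, hW, hr₂⟩ := exists_retract_of_distTriang hT hr₁ hr₃
    exact ⟨W₂, i₂, r₂, hr₂, HasWeightDecomposition.ext hW hW₁ hW₃⟩
  · rintro X Y ⟨W, i', r', hir', hW⟩ ⟨i, r, hir⟩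
    exact ⟨W, i ≫ i', r' ≫ r, by simp [reassoc_of% hir', hir], hW⟩

end WeightDecomposition

namespace ExtModSetting

variable (S : ExtModSetting k D)

lemma hom_eq_zero_of_silting {P : D} (hsilt : S.Silting P) {R Z : D} (hR : R ∈ S.Kb)
    (hRP : ∀ j < 0, RightOrth P j R) (hZP : ∀ j ≥ 0, RightOrth P j Z) (f : R ⟶ Z) : f = 0 := by
  obtain ⟨W, i, r, hir, hW⟩ := hsilt.2 _ isThickSub_isRetractOfWeightDecomposable
    ⟨P, 𝟙 P, 𝟙 P, Category.id_comp _, hasWeightDecomposition_self hsilt.1⟩ hR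
  obtain ⟨L, H, x, y, z, hT, hL, hH⟩ := hW 0
  obtain ⟨r', rfl⟩ : ∃ r' : H ⟶ R, r = y ≫ r' := Triangle.yoneda_exact₂ _ hT r (hL R hRP _)
  rw [← Category.id_comp f, ← hir, Category.assoc, Category.assoc, hH.2 Z hZP (r' ≫ f),
    comp_zero, comp_zero]

lemma hom_eq_zero_of_mem_TP_of_mem_FP {m : ℕ} (hm : 0 < m) {P : D}
    (hP : P ∈ S.projC (-(m : ℤ)) 0) (hsilt : S.Silting P) {Y Z : D} (hY : Y ∈ S.TP m P)
    (hZ : Z ∈ S.FP m P) (f : Y ⟶ Z) : f = 0 := by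
  have hm' : (1 : ℤ) ≤ m := by exact_mod_cast hm
  obtain ⟨W, φ, ψ, χ, hT, hW, -⟩ := S.pm_triangle m Y hm' hY.1.1 hY.1.2
  -- a map `P⟦j⟧ → p_m(Y)` with `j < 0` dies in `Y ∈ T(P)`, so it factors through `W`,
  -- which is concentrated in degree `-m`
  have hR : ∀ j < 0, RightOrth P j (S.pm m Y) := fun j hj g => by
    have hgψ : g ≫ ψ = 0 := shift_hom_eq_zero (add_neg_cancel j) (hY.2 (-j) (by omega)) _
    obtain ⟨g', rfl⟩ : ∃ g' : P⟦j⟧ ⟶ W, g = g' ≫ φ := Triangle.coyoneda_exact₂ _ hT g hgψ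
    rw [S.projC_vanish _ _ _ _ (S.projC_shift _ _ j _ hP)
      (S.t.le_monotone (by omega) W hW) g', zero_comp]
  have hZP : ∀ j ≥ 0, RightOrth P j Z := fun j hj =>
    shift_hom_eq_zero (add_neg_cancel j) (hZ.2 (-j) (by omega))
  have hψf : ψ ≫ f = 0 :=
    S.hom_eq_zero_of_silting hsilt ⟨_, _, S.pm_mem m Y hm' hY.1.1 hY.1.2⟩ hR hZP _
  obtain ⟨w', rfl⟩ : ∃ w' : W⟦(1 : ℤ)⟧ ⟶ Z, f = χ ≫ w' := Triangle.yoneda_exact₃ _ hT f hψf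
  rw [S.t.zero_of_isLE_of_isGE w' (-(m : ℤ) - 1) (1 - m) (by omega)
    ⟨S.t.le_shift _ 1 _ (by omega) W hW⟩ ⟨hZ.1.2⟩, comp_zero]

end ExtModSetting

theorem stmt11 (S : ExtModSetting k D) (m : ℕ) (hm : 0 < m)
    (P : D) (hP : P ∈ S.projC (-(m : ℤ)) 0) (hsilt : S.Silting P)
    -- the canonical triangle  t(νA[m-1]) → νA[m-1] → f(νA[m-1]) → ⬝⟦1⟧
    (TX FX : D) (a : TX ⟶ (S.nakF S.AA)⟦(m : ℤ) - 1⟧)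
    (b : (S.nakF S.AA)⟦(m : ℤ) - 1⟧ ⟶ FX) (c : FX ⟶ TX⟦(1 : ℤ)⟧)
    (hTri1 : Triangle.mk a b c ∈ distTriang D)
    (hTX : TX ∈ S.TP m P) (hFX : FX ∈ S.FP m P)
    -- the canonical triangle  t(A) → A → f(A) → ⬝⟦1⟧
    (TA FA : D) (a' : TA ⟶ S.AA) (b' : S.AA ⟶ FA) (c' : FA ⟶ TA⟦(1 : ℤ)⟧)
    (hTri2 : Triangle.mk a' b' c' ∈ distTriang D)
    (hTA : TA ∈ S.TP m P) (hFA : FA ∈ S.FP m P) :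
    InjIn (S.TP m P) TX ∧ ProjIn (S.FP m P) FA := by
  have hTF : ∀ Y ∈ S.TP m P, ∀ Z ∈ S.FP m P, ∀ f : Y ⟶ Z, f = 0 :=
    fun _ hY _ hZ => S.hom_eq_zero_of_mem_TP_of_mem_FP hm hP hsilt hY hZ
  have hνA : (S.nakF S.AA)⟦(m : ℤ) - 1⟧⟦(1 : ℤ)⟧ ∈ S.injC (-(m : ℤ)) (-(m : ℤ)) := by
    have := S.injC_shift _ _ 1 _ (S.injC_shift 0 0 ((m : ℤ) - 1) _ (S.nakF_mem 0 0 _ S.AA_mem))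
    convert this using 2 <;> ring
  refine ⟨injIn_of_distTriang hTF hTri1 hTX hFX fun Y hY => ?_,
    projIn_of_distTriang hTF hTri2 hTA hFA fun Z hZ => ?_⟩
  · exact S.injC_vanish _ _ _ _ hνA (S.t.ge_antitone (by omega) Y hY.1.2)
  · exact S.projC_vanish 0 0 _ _ S.AA_mem (S.t.le_shift 0 1 (0 - 1) (by omega) Z hZ.1.1)
end
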